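/- arXiv:1712.07026 — 9 statements merged into one kernel-verified Lean document; each statement's English description precedes it below -/
import Mathlib

section
/- For all integers k ≥ 2 and r ≥ 1, the Andrásfai graph A_{k,r} contains no odd cycle of length at most 2k-1; that is, A_{k,r} is C_ℓ-free for every odd ℓ with 3 ≤ ℓ ≤ 2k-1. -/
/-- The generalised Andrásfai graph `A_{k,r}`. -/
def andrasfai (k r : ℕ) : SimpleGraph (Fin ((2*k-1)*(r-1)+2)) :=
  SimpleGraph.fromRel fun i j =>
    (((k : ℚ) - 1) / (2 * k - 1) <
        (min (((i.val : ℤ) - (j.val : ℤ)).natAbs)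
            ((2*k-1)*(r-1)+2 - ((i.val : ℤ) - (j.val : ℤ)).natAbs) : ℚ) /
          ((2*k-1)*(r-1)+2)) ∧
    ((min (((i.val : ℤ) - (j.val : ℤ)).natAbs)
            ((2*k-1)*(r-1)+2 - ((i.val : ℤ) - (j.val : ℤ)).natAbs) : ℚ) /
          ((2*k-1)*(r-1)+2) < (k : ℚ) / (2 * k - 1))

lemma andrasfai_step (k r : ℕ) (hk : 2 ≤ k) (hr : 1 ≤ r)
    {i j : Fin ((2*k-1)*(r-1)+2)} (h : (andrasfai k r).Adj i j) :
    ∃ ε d : ℤ, (ε = 1 ∨ ε = -1) ∧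
      (((2*k-1)*(r-1)+2 : ℕ) : ℤ) ∣ ((j.val : ℤ) - (i.val : ℤ) - ε * d) ∧
      ((k : ℤ) - 1) * ((2*k-1)*(r-1)+2 : ℕ) < d * (2 * k - 1) ∧
      d * (2 * k - 1) < (k : ℤ) * ((2*k-1)*(r-1)+2 : ℕ) := by
  rw [andrasfai, SimpleGraph.fromRel_adj] at h
  obtain ⟨hne, h⟩ := h
  have hsymm : ((j.val:ℤ) - (i.val:ℤ)).natAbs = ((i.val:ℤ) - (j.val:ℤ)).natAbs := by omega
  rw [hsymm] at h
  obtain ⟨h1, h2⟩ := h.elim id id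
  have hiN : i.val < (2*k-1)*(r-1)+2 := i.isLt
  have hjN : j.val < (2*k-1)*(r-1)+2 := j.isLt
  have habs := Int.natAbs_eq ((i.val : ℤ) - (j.val : ℤ))
  have hDN : ((i.val:ℤ) - (j.val:ℤ)).natAbs < (2*k-1)*(r-1)+2 := by omega
  -- cast facts
  have hkQ : (2 : ℚ) ≤ (k : ℚ) := by exact_mod_cast hk
  have h2k1 : (0:ℚ) < 2 * (k:ℚ) - 1 := by linarith
  have hNQ : (((2*k-1)*(r-1)+2 : ℕ) : ℚ) = (2*(k:ℚ)-1)*((r:ℚ)-1)+2 := by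
    have h2k : 1 ≤ 2*k := by omega
    push_cast [Nat.cast_sub h2k, Nat.cast_sub hr]; ring
  have hNpos : (0:ℚ) < (((2*k-1)*(r-1)+2 : ℕ):ℚ) := by positivity
  have hmQ : ((min (((i.val:ℤ) - (j.val:ℤ)).natAbs)
        ((2*k-1)*(r-1)+2 - ((i.val:ℤ) - (j.val:ℤ)).natAbs) : ℕ) : ℚ)
      = min ((((i.val:ℤ) - (j.val:ℤ)).natAbs : ℚ))
          ((2*(k:ℚ)-1)*((r:ℚ)-1)+2 - (((i.val:ℤ) - (j.val:ℤ)).natAbs : ℚ)) := by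
    rw [Nat.cast_min, Nat.cast_sub hDN.le, hNQ]
  rw [← hmQ, ← hNQ, div_lt_div_iff₀ h2k1 hNpos] at h1
  rw [← hmQ, ← hNQ, div_lt_div_iff₀ hNpos h2k1] at h2
  have hm1 : ((k : ℤ) - 1) * (((2*k-1)*(r-1)+2 : ℕ):ℤ)
      < ((min (((i.val:ℤ) - (j.val:ℤ)).natAbs)
          ((2*k-1)*(r-1)+2 - ((i.val:ℤ) - (j.val:ℤ)).natAbs) : ℕ):ℤ) * (2 * k - 1) := by
    have h2k : 1 ≤ 2*k := by omega
    rw [← @Int.cast_lt ℚ]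
    push_cast [Nat.cast_natAbs, Nat.cast_sub hDN.le, Nat.cast_sub h2k, Nat.cast_sub hr] at h1 ⊢
    linarith [h1]
  have hm2 : ((min (((i.val:ℤ) - (j.val:ℤ)).natAbs)
          ((2*k-1)*(r-1)+2 - ((i.val:ℤ) - (j.val:ℤ)).natAbs) : ℕ):ℤ) * (2 * k - 1)
      < (k : ℤ) * (((2*k-1)*(r-1)+2 : ℕ):ℤ) := by
    have h2k : 1 ≤ 2*k := by omega
    rw [← @Int.cast_lt ℚ]
    push_cast [Nat.cast_natAbs, Nat.cast_sub hDN.le, Nat.cast_sub h2k, Nat.cast_sub hr] at h2 ⊢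
    linarith [h2]
  have hmc := min_choice (((i.val:ℤ) - (j.val:ℤ)).natAbs)
      ((2*k-1)*(r-1)+2 - ((i.val:ℤ) - (j.val:ℤ)).natAbs)
  rcases hmc with hc | hc <;> rcases habs with he | he
  · exact ⟨-1, _, Or.inr rfl, ⟨0, by omega⟩, hm1, hm2⟩
  · exact ⟨1, _, Or.inl rfl, ⟨0, by omega⟩, hm1, hm2⟩
  · exact ⟨1, _, Or.inl rfl, ⟨-1, by omega⟩, hm1, hm2⟩
  · exact ⟨-1, _, Or.inr rfl, ⟨1, by omega⟩, hm1, hm2⟩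

lemma andrasfai_walksum (k r : ℕ) (hk : 2 ≤ k) (hr : 1 ≤ r)
    {u v : Fin ((2*k-1)*(r-1)+2)} (w : (andrasfai k r).Walk u v) :
    ∃ S T : ℤ, (((2*k-1)*(r-1)+2 : ℕ) : ℤ) ∣ ((v.val : ℤ) - (u.val : ℤ) - S) ∧
      (2 : ℤ) ∣ (T - w.length) ∧
      |2 * (2*(k:ℤ)-1) * S - (((2*k-1)*(r-1)+2 : ℕ) : ℤ) * (2*(k:ℤ)-1) * T|
        ≤ (w.length : ℤ) * ((((2*k-1)*(r-1)+2 : ℕ) : ℤ) - 1) := by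
  induction w with
  | nil => exact ⟨0, 0, ⟨0, by ring⟩, ⟨0, by simp⟩, by simp⟩
  | @cons a b c h p ih =>
    obtain ⟨S, T, ⟨c1, hc1⟩, ⟨c2, hc2⟩, hb⟩ := ih
    obtain ⟨ε, d, hε, ⟨c3, hc3⟩, hd1, hd2⟩ := andrasfai_step k r hk hr h
    have hNge : (2:ℤ) ≤ (((2*k-1)*(r-1)+2 : ℕ) : ℤ) := by
      have : 2 ≤ (2*k-1)*(r-1)+2 := by omega
      exact_mod_cast this
    have hlc : (((SimpleGraph.Walk.cons h p).length : ℕ) : ℤ) = (p.length : ℤ) + 1 := by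
      simp [SimpleGraph.Walk.length_cons]
    have hstep : |2 * (2*(k:ℤ)-1) * (ε * d) - (((2*k-1)*(r-1)+2 : ℕ) : ℤ) * (2*(k:ℤ)-1) * ε|
        ≤ (((2*k-1)*(r-1)+2 : ℕ) : ℤ) - 1 := by
      rcases hε with h' | h' <;> subst h' <;> rw [abs_le] <;> constructor <;> nlinarith [hd1, hd2]
    refine ⟨ε * d + S, ε + T, ⟨c1 + c3, by linarith⟩, ?_, ?_⟩
    · rcases hε with h' | h'
      · subst h'; exact ⟨c2, by rw [hlc]; linarith⟩
      · subst h'; exact ⟨c2 - 1, by rw [hlc]; linarith⟩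
    · have hsplit : 2 * (2*(k:ℤ)-1) * (ε * d + S) - (((2*k-1)*(r-1)+2 : ℕ) : ℤ) * (2*(k:ℤ)-1) * (ε + T)
          = (2 * (2*(k:ℤ)-1) * (ε * d) - (((2*k-1)*(r-1)+2 : ℕ) : ℤ) * (2*(k:ℤ)-1) * ε)
            + (2 * (2*(k:ℤ)-1) * S - (((2*k-1)*(r-1)+2 : ℕ) : ℤ) * (2*(k:ℤ)-1) * T) := by ring
      rw [hsplit, hlc]
      refine le_trans (abs_add_le _ _) ?_
      nlinarith [hb, hstep]

/-- `A_{k,r}` contains no odd cycle of length at most `2k-1`. -/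
theorem andrasfai_oddCycleFree (k r : ℕ) (hk : 2 ≤ k) (hr : 1 ≤ r)
    (ℓ : ℕ) (hodd : Odd ℓ) (h3 : 3 ≤ ℓ) (hℓ : ℓ ≤ 2*k-1) :
    ¬ ∃ (v : Fin ((2*k-1)*(r-1)+2)) (w : (andrasfai k r).Walk v v),
        w.IsCycle ∧ w.length = ℓ := by
  rintro ⟨v, w, hcyc, hlen⟩
  obtain ⟨S, T, ⟨c1, hc1⟩, ⟨c2, hc2⟩, hb⟩ := andrasfai_walksum k r hk hr w
  rw [hlen] at hc2 hb
  obtain ⟨m, hm⟩ := hodd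
  have hS : S = (((2*k-1)*(r-1)+2 : ℕ) : ℤ) * (-c1) := by linarith
  have hNge : (2:ℤ) ≤ (((2*k-1)*(r-1)+2 : ℕ) : ℤ) := by
    have : 2 ≤ (2*k-1)*(r-1)+2 := by omega
    exact_mod_cast this
  have hℓA : (ℓ:ℤ) ≤ 2*(k:ℤ)-1 := by push_cast; omega
  have hA : (3:ℤ) ≤ 2*(k:ℤ)-1 := by push_cast; omega
  have hX : 2*c1 + T ≠ 0 := by
    intro h0
    have : (ℓ:ℤ) = 2*m+1 := by exact_mod_cast hm
    omega
  rw [hS] at hb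
  have hE : 2 * (2*(k:ℤ)-1) * ((((2*k-1)*(r-1)+2 : ℕ) : ℤ) * (-c1))
      - (((2*k-1)*(r-1)+2 : ℕ) : ℤ) * (2*(k:ℤ)-1) * T
      = -((((2*k-1)*(r-1)+2 : ℕ) : ℤ) * (2*(k:ℤ)-1) * (2*c1 + T)) := by ring
  rw [hE, abs_neg, abs_mul, abs_mul] at hb
  have h1 : |(((2*k-1)*(r-1)+2 : ℕ) : ℤ)| = (((2*k-1)*(r-1)+2 : ℕ) : ℤ) :=
    abs_of_nonneg (by linarith)
  have h2 : |2*(k:ℤ)-1| = 2*(k:ℤ)-1 := abs_of_nonneg (by linarith)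
  rw [h1, h2] at hb
  have h3' : (1:ℤ) ≤ |2*c1 + T| := abs_pos.mpr hX
  have hNA : (0:ℤ) ≤ (((2*k-1)*(r-1)+2 : ℕ) : ℤ) * (2*(k:ℤ)-1) :=
    mul_nonneg (by linarith) (by linarith)
  have m1 := mul_le_mul_of_nonneg_left h3' hNA
  have m2 := mul_le_mul_of_nonneg_right hℓA (show (0:ℤ) ≤ (((2*k-1)*(r-1)+2 : ℕ) : ℤ) - 1 by linarith)
  nlinarith [hb, m1, m2, hA]
end

section
/- For all integers k ≥ 2 and r ≥ 2, any two vertices of the Andrásfai graph A_{k,r} lie on a common cycle of length 2k+1. -/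
/-!
Write `N = (2k-1)(r-1)+2` and `a = (k-1)(r-1)+1`, so that `(2k-1)a = (k-1)N + 1`: the
step `a` inverts `2k-1` modulo `N`. Two vertices whose cyclic difference `c` satisfies
`a ≤ c ≤ N - a` are adjacent. For `e < r-1` the vertices `u, u+a+e, u+2a+e, …, u+2ka+e`
therefore form a closed walk of length `2k+1`: its steps are `a+e, a, …, a, a+(r-2-e)`, which
add up to `kN`. They are distinct because `2k-1` times `ta+δ` (`1 ≤ t ≤ 2k`, `δ < r-1`) is
`t+(2k-1)δ` modulo `N`, strictly between `0` and `N`. Conversely, writing `(2k-1)(v-u) mod N`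
as `t+(2k-1)δ` shows `v = u + ta + δ`, so the walk with `e = δ` passes through `v`.
-/

open SimpleGraph Function

theorem SimpleGraph.cycleGraph.mem_support_cycle {n : ℕ} (x : Fin (n + 3)) :
    x ∈ (cycleGraph.cycle n).support := by
  convert (cycleGraph.cycle n).getVert_mem_support (n + 3 - x.val)
  rw [cycleGraph.getVert_cycle (by omega)]
  ext
  simp [Nat.sub_sub_self x.is_lt.le, Nat.mod_eq_of_lt x.is_lt]

theorem SimpleGraph.exists_isCycle_of_injective_of_adj_add_one {V : Type*} {G : SimpleGraph V}
    {n : ℕ} [NeZero n] (hn : 3 ≤ n) {f : Fin n → V} (hf : Injective f)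
    (hadj : ∀ i, G.Adj (f i) (f (i + 1))) (x : Fin n) :
    ∃ w : G.Walk (f 0) (f 0), w.IsCycle ∧ w.length = n ∧ f x ∈ w.support := by
  obtain ⟨m, rfl⟩ : ∃ m, n = m + 3 := ⟨n - 3, by omega⟩
  let φ : cycleGraph (m + 3) →g G :=
    ⟨f, fun {i j} h => by
      rcases cycleGraph_adj.mp h with h | h
      · rw [sub_eq_iff_eq_add'] at h
        exact h ▸ (hadj j).symm
      · rw [sub_eq_iff_eq_add'] at h
        exact h ▸ hadj i⟩
  refine ⟨(cycleGraph.cycle m).map φ, cycleGraph.isCycle_cycle.map hf, by simp, ?_⟩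
  rw [Walk.support_map]
  exact List.mem_map_of_mem (cycleGraph.mem_support_cycle x)

theorem Nat.exists_eq_add_mul_of_le_mul_add_one {d m c : ℕ} (hd : 0 < d) (hm : 0 < m)
    (hc : 0 < c) (hcm : c ≤ d * m + 1) :
    ∃ t q, 0 < t ∧ t ≤ d + 1 ∧ q < m ∧ c = t + d * q := by
  have hdiv := Nat.div_add_mod (c - 2) d
  have hmod := Nat.mod_lt (c - 2) hd
  have hq : (c - 2) / d < m := by
    rw [Nat.div_lt_iff_lt_mul hd, Nat.mul_comm]
    have := Nat.mul_pos hd hm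
    omega
  exact ⟨c - d * ((c - 2) / d), (c - 2) / d, by omega, by omega, hq, by omega⟩

theorem andrasfai_step_mul {k : ℕ} (hk : 1 ≤ k) (m : ℕ) :
    (2*k-1) * ((k-1)*m+1) = (k-1) * ((2*k-1)*m+2) + 1 := by
  obtain ⟨p, rfl⟩ : ∃ p, k = p + 1 := ⟨k - 1, by omega⟩
  rw [show 2*(p+1)-1 = 2*p+1 by omega, Nat.add_sub_cancel]
  ring

theorem andrasfai_step_mul_add {k : ℕ} (hk : 1 ≤ k) (m : ℕ) :
    (2*k+1) * ((k-1)*m+1) + m = k * ((2*k-1)*m+2) + 1 := by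
  obtain ⟨p, rfl⟩ : ∃ p, k = p + 1 := ⟨k - 1, by omega⟩
  rw [show 2*(p+1)-1 = 2*p+1 by omega, Nat.add_sub_cancel]
  ring

section Arithmetic

variable {k m : ℕ}

theorem andrasfai_not_dvd_step_mul_add {t δ : ℕ} (hk : 1 ≤ k) (ht₀ : 0 < t) (ht : t ≤ 2*k)
    (hδ : δ < m) :
    ¬ (2*k-1)*m+2 ∣ t * ((k-1)*m+1) + δ := by
  intro hdvd
  have hmul :
      (2*k-1) * (t * ((k-1)*m+1) + δ) = t * (k-1) * ((2*k-1)*m+2) + (t + (2*k-1)*δ) := by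
    linear_combination t * andrasfai_step_mul hk m
  have hsmall : 0 < t + (2*k-1)*δ ∧ t + (2*k-1)*δ < (2*k-1)*m+2 := by
    have := Nat.mul_le_mul_left (2*k-1) (show δ + 1 ≤ m from hδ)
    rw [Nat.mul_add_one] at this
    omega
  have : (2*k-1)*m+2 ∣ t + (2*k-1)*δ :=
    (Nat.dvd_add_right (Dvd.intro_left _ rfl)).mp (hmul ▸ hdvd.mul_left (2*k-1))
  exact absurd (Nat.le_of_dvd hsmall.1 this) (by omega)

open Fin.CommRing in
theorem andrasfai_eq_zero_or_eq_step_mul_add (hk : 1 ≤ k) (hm : 0 < m) (x : Fin ((2*k-1)*m+2)) :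
    x = 0 ∨
      ∃ t δ, 0 < t ∧ t ≤ 2*k ∧ δ < m ∧ x = ((t * ((k-1)*m+1) + δ : ℕ) : Fin _) := by
  set c := (((2*k-1 : ℕ) : Fin ((2*k-1)*m+2)) * x).val with hc
  have hx : x = ((((k-1)*m+1) * c : ℕ) : Fin _) := by
    have hinv : (((2*k-1)*((k-1)*m+1) : ℕ) : Fin ((2*k-1)*m+2)) = 1 := by
      rw [andrasfai_step_mul hk, Nat.cast_add, Nat.cast_mul, Fin.natCast_self, mul_zero, zero_add,
        Nat.cast_one]
    rw [hc, Nat.cast_mul, Fin.cast_val_eq_self, ← mul_assoc, ← Nat.cast_mul,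
      Nat.mul_comm ((k-1)*m+1), hinv, one_mul]
  rcases Nat.eq_zero_or_pos c with hc0 | hc0
  · left
    rw [hx, hc0, mul_zero, Nat.cast_zero]
  · right
    have hcN : c ≤ (2*k-1)*m+1 := Nat.le_of_lt_succ (Fin.is_lt _)
    obtain ⟨t, q, ht₀, ht, hq, hct⟩ :=
      Nat.exists_eq_add_mul_of_le_mul_add_one (by omega) hm hc0 hcN
    refine ⟨t, q, ht₀, by omega, hq, ?_⟩
    have hsplit :
        ((k-1)*m+1) * (t + (2*k-1)*q) = t*((k-1)*m+1) + q + q*(k-1)*((2*k-1)*m+2) := by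
      linear_combination q * andrasfai_step_mul hk m
    rw [hx, hct, hsplit, Nat.cast_add _ (q*(k-1)*_), Nat.cast_mul _ ((2*k-1)*m+2),
      Fin.natCast_self, mul_zero, add_zero]

end Arithmetic

theorem andrasfai_window_ratio {k m s : ℚ} (hk : 1 ≤ k) (hm : 0 ≤ m)
    (h₁ : (k - 1) * m + 1 ≤ s) (h₂ : s ≤ k * m + 1) :
    (k - 1) / (2 * k - 1) < s / ((2 * k - 1) * m + 2) ∧
      s / ((2 * k - 1) * m + 2) < k / (2 * k - 1) := by
  have hq : 0 < 2 * k - 1 := by linarith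
  have hN : 0 < (2 * k - 1) * m + 2 := by positivity
  constructor
  · rw [div_lt_div_iff₀ hq hN]; nlinarith
  · rw [div_lt_div_iff₀ hN hq]; nlinarith

open Fin.CommRing in
theorem andrasfai_adj_add_natCast {k r c : ℕ} (hk : 1 ≤ k) (hr : 1 ≤ r)
    (x : Fin ((2*k-1)*(r-1)+2)) (hc₁ : (k-1)*(r-1)+1 ≤ c) (hc₂ : c ≤ k*(r-1)+1) :
    (andrasfai k r).Adj x (x + (c : Fin ((2*k-1)*(r-1)+2))) := by
  have hcN : c < (2*k-1)*(r-1)+2 := by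
    have := Nat.mul_le_mul_right (r-1) (show k ≤ 2*k-1 by omega)
    omega
  set D := ((x.val : ℤ) - ((x + (c : Fin ((2*k-1)*(r-1)+2))).val : ℤ)).natAbs with hD
  have hD_cases : D = c ∨ D + c = (2*k-1)*(r-1)+2 := by
    rw [Fin.val_add, Fin.val_natCast, Nat.mod_eq_of_lt hcN] at hD
    rcases lt_or_ge (x.val + c) ((2*k-1)*(r-1)+2) with h | h
    · rw [Nat.mod_eq_of_lt h] at hD; omega
    · rw [Nat.mod_eq_sub_mod h, Nat.mod_eq_of_lt (by omega)] at hD; omega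
  have hD0 : D ≠ 0 := by omega
  have hcast : (((2*k-1)*(r-1)+2 : ℕ) : ℚ) = (2*k-1)*(r-1)+2 := by
    push_cast [Nat.cast_sub (show 1 ≤ 2*k by omega), Nat.cast_sub hr]; rfl
  have hk' : (1 : ℚ) ≤ k := by exact_mod_cast hk
  have hm : (0 : ℚ) ≤ r - 1 := by simp [hr]
  have hc₁' : (((k-1)*(r-1)+1 : ℕ) : ℚ) ≤ c := by exact_mod_cast hc₁
  have hc₂' : (c : ℚ) ≤ ((k*(r-1)+1 : ℕ) : ℚ) := by exact_mod_cast hc₂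
  push_cast [Nat.cast_sub hk, Nat.cast_sub hr] at hc₁' hc₂'
  have hmin : min (D : ℚ) ((2*k-1)*(r-1)+2 - D) = min (c : ℚ) ((2*k-1)*(r-1)+2 - c) := by
    rcases hD_cases with h | h
    · rw [h]
    · rw [min_comm, ← hcast, ← h]; push_cast; ring_nf
  simp only [andrasfai, fromRel_adj]
  refine ⟨fun h => hD0 (by rw [hD, ← h]; simp), Or.inl ?_⟩
  rw [← hD, hmin]
  exact andrasfai_window_ratio hk' hm (le_min hc₁' (by linarith)) (min_le_of_left_le hc₂')

open Fin.CommRing in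
def andrasfaiCycle (k r e : ℕ) (u : Fin ((2*k-1)*(r-1)+2)) (i : Fin (2*k+1)) :
    Fin ((2*k-1)*(r-1)+2) :=
  if i = 0 then u else u + ((i.val * ((k-1)*(r-1)+1) + e : ℕ) : Fin _)

section Cycle

variable {k r e : ℕ}

theorem andrasfaiCycle_zero (u : Fin ((2*k-1)*(r-1)+2)) : andrasfaiCycle k r e u 0 = u :=
  if_pos rfl

open Fin.CommRing in
theorem andrasfaiCycle_of_ne_zero (u : Fin ((2*k-1)*(r-1)+2)) {i : Fin (2*k+1)} (hi : i ≠ 0) :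
    andrasfaiCycle k r e u i = u + ((i.val * ((k-1)*(r-1)+1) + e : ℕ) : Fin _) :=
  if_neg hi

open Fin.CommRing in
theorem andrasfaiCycle_adj (hk : 1 ≤ k) (he : e < r - 1) (u : Fin ((2*k-1)*(r-1)+2))
    (i : Fin (2*k+1)) :
    (andrasfai k r).Adj (andrasfaiCycle k r e u i) (andrasfaiCycle k r e u (i + 1)) := by
  have hr : 1 ≤ r := by omega
  have hkm : k*(r-1) = (k-1)*(r-1) + (r-1) := by
    have := Nat.le_mul_of_pos_left (r-1) hk
    rw [Nat.sub_one_mul]; omega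
  by_cases hlast : i = Fin.last (2*k)
  · obtain ⟨s, hs⟩ : ∃ s, e + s + 1 = r - 1 := ⟨r - 1 - e - 1, by omega⟩
    have hlast0 : Fin.last (2*k) ≠ 0 := by rw [Ne, Fin.ext_iff, Fin.val_last, Fin.val_zero]; omega
    have hwrap : andrasfaiCycle k r e u 0 =
        andrasfaiCycle k r e u (Fin.last (2*k)) + (((k-1)*(r-1)+1 + s : ℕ) : Fin _) := by
      have : 2*k*((k-1)*(r-1)+1) + e + ((k-1)*(r-1)+1 + s) = k * ((2*k-1)*(r-1)+2) := by
        linear_combination andrasfai_step_mul_add hk (r-1) + hs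
      rw [andrasfaiCycle_zero, andrasfaiCycle_of_ne_zero u hlast0, Fin.val_last, add_assoc,
        ← Nat.cast_add, this, Nat.cast_mul, Fin.natCast_self, mul_zero, add_zero]
    rw [hlast, Fin.last_add_one, hwrap]
    exact andrasfai_adj_add_natCast hk hr _ (by omega) (by omega)
  · have hsucc : (i + 1).val = i.val + 1 := by rw [Fin.val_add_one, if_neg hlast]
    have hsucc0 : i + 1 ≠ 0 := fun h => by simp [h] at hsucc
    by_cases hi0 : i = 0
    · subst hi0
      rw [andrasfaiCycle_zero, andrasfaiCycle_of_ne_zero u hsucc0, hsucc, Fin.val_zero, zero_add,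
        one_mul]
      exact andrasfai_adj_add_natCast hk hr u (by omega) (by omega)
    · have hnext : andrasfaiCycle k r e u (i + 1) =
          andrasfaiCycle k r e u i + (((k-1)*(r-1)+1 : ℕ) : Fin _) := by
        rw [andrasfaiCycle_of_ne_zero u hi0, andrasfaiCycle_of_ne_zero u hsucc0, hsucc, add_assoc,
          ← Nat.cast_add]
        congr 2
        ring
      rw [hnext]
      exact andrasfai_adj_add_natCast hk hr _ le_rfl (by omega)

open Fin.CommRing in
theorem andrasfaiCycle_injective (hk : 1 ≤ k) (he : e < r - 1) (u : Fin ((2*k-1)*(r-1)+2)) :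
    Injective (andrasfaiCycle k r e u) := by
  have hne_of_lt :
      ∀ i j : Fin (2*k+1), i < j → andrasfaiCycle k r e u i ≠ andrasfaiCycle k r e u j := by
    intro i j hij h
    have hj0 : j ≠ 0 := Fin.ne_zero_of_lt hij
    have hj₀ : 0 < j.val := Nat.pos_of_ne_zero (Fin.val_ne_zero_iff.mpr hj0)
    have hj : j.val ≤ 2*k := Nat.le_of_lt_succ j.is_lt
    rw [andrasfaiCycle_of_ne_zero u hj0] at h
    by_cases hi0 : i = 0
    · rw [hi0, andrasfaiCycle_zero, left_eq_add, Fin.natCast_eq_zero] at h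
      exact andrasfai_not_dvd_step_mul_add hk hj₀ hj he h
    · rw [andrasfaiCycle_of_ne_zero u hi0] at h
      obtain ⟨d, hd⟩ : ∃ d, j.val = i.val + d := ⟨j.val - i.val, by omega⟩
      have hsplit : j.val * ((k-1)*(r-1)+1) + e =
          i.val * ((k-1)*(r-1)+1) + e + (d * ((k-1)*(r-1)+1) + 0) := by
        rw [hd]; ring
      rw [hsplit, Nat.cast_add _ (_ + 0), ← add_assoc, left_eq_add, Fin.natCast_eq_zero] at h
      exact andrasfai_not_dvd_step_mul_add hk (by omega) (by omega) (by omega) h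
  intro i j h
  rcases lt_trichotomy i j with hij | rfl | hij
  · exact absurd h (hne_of_lt i j hij)
  · rfl
  · exact absurd h.symm (hne_of_lt j i hij)

end Cycle

/-- Any two vertices of `A_{k,r}` (for `k ≥ 2`, `r ≥ 2`) lie on a common cycle of
length `2k+1`. -/
theorem andrasfai_two_vertices_on_common_cycle (k r : ℕ) (hk : 2 ≤ k) (hr : 2 ≤ r)
    (u v : Fin ((2*k-1)*(r-1)+2)) :
    ∃ (w : (andrasfai k r).Walk u u), w.IsCycle ∧ w.length = 2*k+1 ∧ v ∈ w.support := by
  obtain ⟨e, x, he, hv⟩ : ∃ e x, e < r - 1 ∧ andrasfaiCycle k r e u x = v := by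
    rcases andrasfai_eq_zero_or_eq_step_mul_add (by omega) (by omega) (v - u) with
      h | ⟨t, δ, ht₀, ht, hδ, h⟩
    · exact ⟨0, 0, by omega, (andrasfaiCycle_zero u).trans (sub_eq_zero.mp h).symm⟩
    · have ht0 : (⟨t, by omega⟩ : Fin (2*k+1)) ≠ 0 := Fin.ne_of_val_ne ht₀.ne'
      refine ⟨δ, ⟨t, by omega⟩, hδ, ?_⟩
      rw [andrasfaiCycle_of_ne_zero u ht0, ← h, add_sub_cancel]
  have hcycle := exists_isCycle_of_injective_of_adj_add_one (by omega)
    (andrasfaiCycle_injective (by omega) he u) (andrasfaiCycle_adj (by omega) he u) x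
  rwa [andrasfaiCycle_zero, hv] at hcycle
end

section
/- For all integers k ≥ 2 and r ≥ 2, the sequence u_0, u_1, ..., u_{n-1}, u_0 with u_j ≡ j·((k-1)(r-1)+1)/n in ℝ/ℤ, where n = (2k-1)(r-1)+2, is a Hamiltonian cycle of the Andrásfai graph A_{k,r}. -/
namespace SimpleGraph

theorem exists_isHamiltonianCycle_of_periodic {V : Type*} [Fintype V] [DecidableEq V]
    {G : SimpleGraph V} {N : ℕ} {f : ℕ → V} (hN : 3 ≤ N) (hcard : Fintype.card V = N)
    (hper : Function.Periodic f N) (hinj : Set.InjOn f (Set.Iio N))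
    (hadj : ∀ j, G.Adj (f j) (f (j + 1))) :
    ∃ w : G.Walk (f 0) (f 0),
      w.IsHamiltonianCycle ∧ w.support = (List.range (N + 1)).map f := by
  have hchain : ((List.range (N + 1)).map f).IsChain G.Adj :=
    (List.isChain_map f).2 ((List.isChain_range_succ _ N).2 fun m _ => hadj m)
  let w : G.Walk (f 0) (f 0) :=
    (Walk.ofSupport _ (by simp) hchain).copy (by simp) (by simp [hper.eq])
  have hsupp : w.support = (List.range (N + 1)).map f := by simp [w]
  have hlen : w.length = N := by simp [w]
  refine ⟨w, ?_, hsupp⟩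
  rw [Walk.isHamiltonianCycle_iff_isCycle_and_length_eq,
    Walk.isCycle_iff_isPath_tail_and_le_length, hlen, hcard, Walk.isPath_def,
    Walk.support_tail_of_not_nil _ (Walk.not_nil_iff_lt_length.2 (by omega)), hsupp,
    List.range_succ_eq_map, List.map_cons, List.tail_cons, List.map_map]
  refine ⟨⟨List.Nodup.map_on ?_ List.nodup_range, hN⟩, rfl⟩
  intro i hi j hj hij
  rw [List.mem_range] at hi hj
  have hmod : (i + 1) % N = (j + 1) % N :=
    hinj (Nat.mod_lt _ (by omega)) (Nat.mod_lt _ (by omega))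
      (by rw [hper.map_mod_nat, hper.map_mod_nat]; exact hij)
  exact (Nat.ModEq.add_right_cancel' 1 hmod).eq_of_lt_of_lt hi hj

theorem exists_isHamiltonianCycle_mul_mod {N S : ℕ} (hN : 3 ≤ N) (hS : N.Coprime S)
    {G : SimpleGraph (Fin N)}
    (hadj : ∀ x : Fin N, G.Adj x ⟨(x + S) % N, Nat.mod_lt _ x.pos⟩) :
    ∃ w : G.Walk ⟨0, by omega⟩ ⟨0, by omega⟩, w.IsHamiltonianCycle ∧
      w.support = (List.range (N + 1)).map fun j => ⟨j * S % N, Nat.mod_lt _ (by omega)⟩ := by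
  set f : ℕ → Fin N := fun j => ⟨j * S % N, Nat.mod_lt _ (by omega)⟩
  have hper : Function.Periodic f N := fun j =>
    Fin.ext (by simp only [f, add_mul, Nat.add_mul_mod_self_left])
  have hinj : Set.InjOn f (Set.Iio N) := fun i hi j hj hij =>
    (Nat.ModEq.cancel_right_of_coprime hS (Fin.val_eq_of_eq hij)).eq_of_lt_of_lt hi hj
  have hstep (j : ℕ) : f (j + 1) = ⟨((f j : ℕ) + S) % N, Nat.mod_lt _ (by omega)⟩ :=
    Fin.ext (by simp only [f, add_one_mul, Nat.mod_add_mod])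
  have h0 : f 0 = ⟨0, by omega⟩ := Fin.ext (by simp [f])
  obtain ⟨w, hw, hsupp⟩ := exists_isHamiltonianCycle_of_periodic hN (Fintype.card_fin N) hper
    hinj fun j => hstep j ▸ hadj (f j)
  rw [← h0]
  exact ⟨w, hw, hsupp⟩

end SimpleGraph

theorem natAbs_sub_add_mod_eq {N S x : ℕ} (hx : x < N) (hS : S ≤ N) :
    ((x : ℤ) - ((x + S) % N : ℕ)).natAbs = S ∨
      ((x : ℤ) - ((x + S) % N : ℕ)).natAbs = N - S := by
  rcases lt_or_ge (x + S) N with h | h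
  · rw [Nat.mod_eq_of_lt h]
    omega
  · rw [Nat.mod_eq_sub_mod h, Nat.mod_eq_of_lt (by omega)]
    omega

theorem min_natCast_sub_eq {R : Type*} [Ring R] [LinearOrder R] [IsOrderedRing R]
    {N S d : ℕ} (h2S : 2 * S ≤ N) (hd : d = S ∨ d = N - S) :
    min (d : R) (N - d) = S := by
  rcases hd with rfl | rfl
  · refine min_eq_left ?_
    rw [le_sub_iff_add_le, ← Nat.cast_add]
    exact Nat.mono_cast (by omega)
  · rw [Nat.cast_sub (by omega), sub_sub_cancel]
    refine min_eq_right ?_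
    rw [le_sub_iff_add_le, ← Nat.cast_add]
    exact Nat.mono_cast (by omega)

theorem andrasfai_step_div_mem_Ioo {K : Type*} [Field K] [LinearOrder K] [IsStrictOrderedRing K]
    {k r : K} (hk : 1 ≤ k) (hr : 1 ≤ r) :
    ((k - 1) * (r - 1) + 1) / ((2 * k - 1) * (r - 1) + 2) ∈
      Set.Ioo ((k - 1) / (2 * k - 1)) (k / (2 * k - 1)) := by
  have h2k : 0 < 2 * k - 1 := by linarith
  have hN : 0 < (2 * k - 1) * (r - 1) + 2 := by nlinarith
  constructor
  · rw [div_lt_div_iff₀ h2k hN]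
    nlinarith
  · rw [div_lt_div_iff₀ hN h2k]
    nlinarith

theorem andrasfai_order_eq {k r : ℕ} (hk : 1 ≤ k) :
    (2*k-1)*(r-1)+2 = (r-1) + ((k-1)*(r-1)+1) * 2 := by
  obtain ⟨j, rfl⟩ : ∃ j, k = j + 1 := ⟨k - 1, by omega⟩
  rw [show 2 * (j + 1) - 1 = 2 * j + 1 by omega, Nat.add_sub_cancel]
  ring

theorem andrasfai_order_coprime {k r : ℕ} (hk : 1 ≤ k) :
    Nat.Coprime ((2*k-1)*(r-1)+2) ((k-1)*(r-1)+1) := by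
  rw [andrasfai_order_eq hk, Nat.coprime_add_mul_left_left, Nat.coprime_mul_right_add_right]
  exact Nat.coprime_one_right _

theorem andrasfai_adj_add_mod {k r : ℕ} (hk : 1 ≤ k) (hr : 1 ≤ r)
    (x : Fin ((2*k-1)*(r-1)+2)) :
    (andrasfai k r).Adj x
      ⟨(x + ((k-1)*(r-1)+1)) % ((2*k-1)*(r-1)+2), Nat.mod_lt _ x.pos⟩ := by
  have h2S : 2 * ((k-1)*(r-1)+1) ≤ (2*k-1)*(r-1)+2 := by
    rw [andrasfai_order_eq hk]
    omega
  have hd := natAbs_sub_add_mod_eq x.isLt (by omega : (k-1)*(r-1)+1 ≤ (2*k-1)*(r-1)+2)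
  have hN : (((2*k-1)*(r-1)+2 : ℕ) : ℚ) = (2 * k - 1) * (r - 1) + 2 := by
    push_cast [Nat.cast_sub (by omega : 1 ≤ 2 * k), Nat.cast_sub hr]
    ring
  have hS : (((k-1)*(r-1)+1 : ℕ) : ℚ) = (k - 1) * (r - 1) + 1 := by
    push_cast [Nat.cast_sub hk, Nat.cast_sub hr]
    ring
  have hmin := min_natCast_sub_eq (R := ℚ) h2S hd
  rw [hN, hS] at hmin
  rw [andrasfai, SimpleGraph.fromRel_adj]
  refine ⟨fun h => ?_, Or.inl ?_⟩
  · have hx : (x : ℕ) = (x + ((k-1)*(r-1)+1)) % ((2*k-1)*(r-1)+2) := congrArg Fin.val h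
    rw [← hx] at hd
    omega
  · rw [hmin]
    exact andrasfai_step_div_mem_Ioo (by exact_mod_cast hk) (by exact_mod_cast hr)

/-- The sequence `u_0, u_1, …, u_{n-1}, u_0` with `u_j ≡ j·((k-1)(r-1)+1)/n` in `ℝ/ℤ`,
i.e. `u_j = j·((k-1)(r-1)+1) mod n` as a corner of the `n`-gon, where `n = (2k-1)(r-1)+2`,
is a Hamiltonian cycle of the Andrásfai graph `A_{k,r}`. -/
theorem andrasfai_hamiltonianCycle (k r : ℕ) (hk : 2 ≤ k) (hr : 2 ≤ r) :
    ∃ (w : (andrasfai k r).Walk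
        (⟨0, by omega⟩ : Fin ((2*k-1)*(r-1)+2)) (⟨0, by omega⟩ : Fin ((2*k-1)*(r-1)+2))),
      w.IsHamiltonianCycle ∧
      w.support = (List.range ((2*k-1)*(r-1)+2+1)).map
        (fun j => (⟨(j * ((k-1)*(r-1)+1)) % ((2*k-1)*(r-1)+2), Nat.mod_lt _ (by omega)⟩ :
          Fin ((2*k-1)*(r-1)+2))) := by
  have hpos : 0 < (2*k-1)*(r-1) := Nat.mul_pos (by omega) (by omega)
  exact SimpleGraph.exists_isHamiltonianCycle_mul_mod (by omega)
    (andrasfai_order_coprime (by omega)) (andrasfai_adj_add_mod (by omega) (by omega))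
end

section
/- In any closed walk of odd length ℓ with 3 ≤ ℓ ≤ 2k-1 on ℝ/ℤ in which every step lies in the open interval ((k-1)/(2k-1), k/(2k-1)), the total displacement lies in (j-1, j) for j = (ℓ+1)/2, hence is nonzero; consequently no such closed walk exists in any graph from the class 𝒜_k. -/
/-- In any closed walk of odd length `ℓ` with `3 ≤ ℓ ≤ 2k-1` on `ℝ/ℤ` in which every step lies
in the open interval `((k-1)/(2k-1), k/(2k-1))`, the total displacement lies in `(j-1, j)` for
`j = (ℓ+1)/2`, hence is nonzero; consequently no closed walk of such a length exists in any
graph from the class `𝒜_k` (graphs on a finite subset of `ℝ/ℤ`, two vertices adjacent iff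
their difference lies in the image of the interval `((k-1)/(2k-1), k/(2k-1))`). -/
theorem no_short_odd_closed_walk_in_Andrasfai_class (k : ℕ) (hk : 2 ≤ k)
    (ℓ : ℕ) (hodd : Odd ℓ) (h3 : 3 ≤ ℓ) (hℓ : ℓ ≤ 2*k-1) :
    (∀ steps : Fin ℓ → ℝ,
      (∀ i, steps i ∈ Set.Ioo (((k : ℝ) - 1) / (2*k - 1)) ((k : ℝ) / (2*k - 1))) →
        (∑ i, steps i) ∈ Set.Ioo ((((ℓ : ℝ) + 1) / 2) - 1) (((ℓ : ℝ) + 1) / 2) ∧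
        (∑ i, steps i) ≠ 0) ∧
    (∀ (V : Set (AddCircle (1 : ℝ))), V.Finite →
      ∀ G : SimpleGraph V,
        (∀ u v : V, G.Adj u v ↔
          ((u : AddCircle (1 : ℝ)) - (v : AddCircle (1 : ℝ))) ∈
            (fun x : ℝ => (x : AddCircle (1 : ℝ))) ''
              Set.Ioo (((k : ℝ) - 1) / (2*k - 1)) ((k : ℝ) / (2*k - 1))) →
        ¬ ∃ (v : V) (w : G.Walk v v), w.length = ℓ) := by
  have hk1 : (2:ℝ) ≤ (k:ℝ) := by exact_mod_cast hk
  have hd : (0:ℝ) < 2*(k:ℝ) - 1 := by linarith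
  have hℓR : (ℓ:ℝ) ≤ 2*(k:ℝ) - 1 := by
    have h1 : (ℓ:ℝ) ≤ ((2*k-1 : ℕ):ℝ) := Nat.cast_le.mpr hℓ
    have h2 : ((2*k-1 : ℕ):ℝ) = 2*(k:ℝ) - 1 := by
      rw [Nat.cast_sub (by omega)]; push_cast; ring
    linarith [h1, h2.le, h2.ge]
  have h3R : (3:ℝ) ≤ (ℓ:ℝ) := by exact_mod_cast h3
  have hne : Nonempty (Fin ℓ) := ⟨⟨0, by omega⟩⟩
  have key : ∀ steps : Fin ℓ → ℝ,
      (∀ i, steps i ∈ Set.Ioo (((k : ℝ) - 1) / (2*k - 1)) ((k : ℝ) / (2*k - 1))) →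
      (∑ i, steps i) ∈ Set.Ioo ((((ℓ : ℝ) + 1) / 2) - 1) (((ℓ : ℝ) + 1) / 2) := by
    intro steps hs
    have hlow : (ℓ:ℝ) * (((k : ℝ) - 1) / (2*k - 1)) < ∑ i, steps i := by
      have := Finset.sum_lt_sum_of_nonempty (Finset.univ_nonempty (α := Fin ℓ))
        (f := fun _ => ((k : ℝ) - 1) / (2*k - 1)) (g := steps) (fun i _ => (hs i).1)
      simpa [Finset.sum_const, Finset.card_univ, nsmul_eq_mul] using this
    have hhigh : (∑ i, steps i) < (ℓ:ℝ) * ((k : ℝ) / (2*k - 1)) := by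
      have := Finset.sum_lt_sum_of_nonempty (Finset.univ_nonempty (α := Fin ℓ))
        (f := steps) (g := fun _ => (k : ℝ) / (2*k - 1)) (fun i _ => (hs i).2)
      simpa [Finset.sum_const, Finset.card_univ, nsmul_eq_mul] using this
    constructor
    · have : (((ℓ : ℝ) + 1) / 2) - 1 ≤ (ℓ:ℝ) * (((k : ℝ) - 1) / (2*k - 1)) := by
        rw [← mul_div_assoc, le_div_iff₀ hd]
        nlinarith
      linarith
    · have : (ℓ:ℝ) * ((k : ℝ) / (2*k - 1)) ≤ ((ℓ : ℝ) + 1) / 2 := by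
        rw [← mul_div_assoc, div_le_iff₀ hd]
        nlinarith
      linarith
  constructor
  · intro steps hs
    refine ⟨key steps hs, ?_⟩
    have := (key steps hs).1
    have : (0:ℝ) < ∑ i, steps i := by linarith
    linarith
  · rintro V hV G hadj ⟨v, w, hw⟩
    have hstep : ∀ i : Fin ℓ, ∃ x : ℝ,
        x ∈ Set.Ioo (((k : ℝ) - 1) / (2*k - 1)) ((k : ℝ) / (2*k - 1)) ∧
        (x : AddCircle (1:ℝ)) =
          ((w.getVert (i+1) : V) : AddCircle (1:ℝ)) - ((w.getVert i : V) : AddCircle (1:ℝ)) := by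
      intro i
      have hi : (i:ℕ) < w.length := by rw [hw]; exact i.2
      have hadj' : G.Adj (w.getVert (i+1)) (w.getVert i) := (w.adj_getVert_succ hi).symm
      obtain ⟨x, hx, hxe⟩ := (hadj _ _).mp hadj'
      exact ⟨x, hx, hxe⟩
    choose steps hmem heq using hstep
    have hsum := key steps hmem
    have hcast : ((∑ i, steps i : ℝ) : AddCircle (1:ℝ)) = 0 := by
      have h1 : ((∑ i, steps i : ℝ) : AddCircle (1:ℝ)) =
          ∑ i, ((steps i : ℝ) : AddCircle (1:ℝ)) := by
        simpa using map_sum (QuotientAddGroup.mk' (AddSubgroup.zmultiples (1:ℝ))) steps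
          Finset.univ
      rw [h1]
      have h2 : ∑ i : Fin ℓ, ((steps i : ℝ) : AddCircle (1:ℝ)) =
          ∑ i ∈ Finset.range ℓ,
            (((w.getVert (i+1) : V) : AddCircle (1:ℝ)) -
              ((w.getVert i : V) : AddCircle (1:ℝ))) := by
        rw [Finset.sum_range fun i => _]
        exact Finset.sum_congr rfl fun i _ => heq i
      rw [h2, Finset.sum_range_sub (f := fun n => ((w.getVert n : V) : AddCircle (1:ℝ)))]
      have h0 : w.getVert 0 = v := w.getVert_zero
      have hl : w.getVert ℓ = v := by rw [← hw]; exact w.getVert_length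
      rw [h0, hl, sub_self]
    rw [AddCircle.coe_eq_zero_iff] at hcast
    obtain ⟨n, hn⟩ := hcast
    simp only [zsmul_eq_mul, mul_one] at hn
    obtain ⟨m, hm⟩ := hodd
    have hmR : (ℓ:ℝ) = 2*(m:ℝ) + 1 := by rw [hm]; push_cast; ring
    simp only [Set.mem_Ioo, ← hn, hmR] at hsum
    have h1 : ((m:ℤ):ℝ) < (n:ℝ) := by push_cast; linarith [hsum.1]
    have h2 : (n:ℝ) < ((m:ℤ):ℝ) + 1 := by push_cast; linarith [hsum.2]
    have h1' : (m:ℤ) < n := by exact_mod_cast h1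
    have h2' : n < (m:ℤ) + 1 := by exact_mod_cast h2
    omega
end

section
/- Let G = (A, B, E) be a bipartite graph with |A| ≥ |B| ≥ k. If the number of edges between A and B exceeds (|A| + |B|)·k, then G contains a path of length k (k edges) whose endpoints, when k is even, both lie in the larger side appropriately; in particular G contains a path with k edges. -/
open Finset SimpleGraph

private lemma bip_eg_core {V : Type} [Fintype V] [DecidableEq V]
    (G : SimpleGraph V) [DecidableRel G.Adj] (k : ℕ) :
    ∀ S : Finset V, 2 * k * S.card < ∑ v ∈ S, (S.filter (G.Adj v)).card →
      ∃ T, T ⊆ S ∧ T.Nonempty ∧ ∀ v ∈ T, k + 1 ≤ (T.filter (G.Adj v)).card := by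
  intro S
  induction S using Finset.strongInduction with
  | _ S ih =>
    intro hS
    by_cases h : ∀ v ∈ S, k + 1 ≤ (S.filter (G.Adj v)).card
    · refine ⟨S, le_refl _, ?_, h⟩
      rw [Finset.nonempty_iff_ne_empty]
      rintro rfl
      simp at hS
    · push_neg at h
      obtain ⟨v, hv, hdv⟩ := h
      rw [Nat.lt_succ_iff] at hdv
      have key : ∑ w ∈ S, (S.filter (G.Adj w)).card ≤
          (∑ w ∈ S.erase v, ((S.erase v).filter (G.Adj w)).card) +
            2 * (S.filter (G.Adj v)).card := by
        have hsplit : ∑ w ∈ S, (S.filter (G.Adj w)).card =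
            (S.filter (G.Adj v)).card + ∑ w ∈ S.erase v, (S.filter (G.Adj w)).card := by
          rw [← Finset.add_sum_erase _ _ hv]
        have hpt : ∀ w ∈ S.erase v, (S.filter (G.Adj w)).card =
            ((S.erase v).filter (G.Adj w)).card + (if G.Adj w v then 1 else 0) := by
          intro w hw
          have hins : S = insert v (S.erase v) := (Finset.insert_erase hv).symm
          conv_lhs => rw [hins, Finset.filter_insert]
          by_cases hadj : G.Adj w v
          · rw [if_pos hadj, if_pos hadj, Finset.card_insert_of_notMem (by simp)]
          · rw [if_neg hadj, if_neg hadj, Nat.add_zero]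
        have hsum2 : ∑ w ∈ S.erase v, (S.filter (G.Adj w)).card =
            (∑ w ∈ S.erase v, ((S.erase v).filter (G.Adj w)).card) +
              ∑ w ∈ S.erase v, (if G.Adj w v then 1 else 0) := by
          rw [← Finset.sum_add_distrib]
          exact Finset.sum_congr rfl hpt
        have hle : (∑ w ∈ S.erase v, (if G.Adj w v then 1 else 0)) ≤
            (S.filter (G.Adj v)).card := by
          rw [← Finset.card_filter]
          apply Finset.card_le_card
          intro w hw
          simp only [Finset.mem_filter, Finset.mem_erase] at hw ⊢
          exact ⟨hw.1.2, hw.2.symm⟩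
        omega
      have hcard : (S.erase v).card + 1 = S.card := Finset.card_erase_add_one hv
      have hrec : 2 * k * (S.erase v).card <
          ∑ w ∈ S.erase v, ((S.erase v).filter (G.Adj w)).card := by
        have : 2 * k * S.card = 2 * k * (S.erase v).card + 2 * k := by
          rw [← hcard]; ring
        omega
      obtain ⟨T, hTsub, hTne, hT⟩ := ih (S.erase v) (Finset.erase_ssubset hv) hrec
      exact ⟨T, hTsub.trans (Finset.erase_subset _ _), hTne, hT⟩

private lemma bip_eg_path {V : Type} [Fintype V] [DecidableEq V]
    (G : SimpleGraph V) [DecidableRel G.Adj] (A B : Finset V) (k : ℕ)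
    (hpart : ∀ u v : V, G.Adj u v → (u ∈ A ∧ v ∈ B) ∨ (u ∈ B ∧ v ∈ A))
    (hdisj : Disjoint A B)
    (T : Finset V) (hT : ∀ v ∈ T, k + 1 ≤ (T.filter (G.Adj v)).card)
    (a : V) (ha : a ∈ A) (haT : a ∈ T) :
    ∀ j, j ≤ k → ∃ (v : V) (p : G.Walk v a), p.IsPath ∧ p.length = j ∧
      (∀ x ∈ p.support, x ∈ T) ∧ (v ∈ A ↔ Even j) := by
  intro j
  induction j with
  | zero =>
    intro _
    refine ⟨a, SimpleGraph.Walk.nil, SimpleGraph.Walk.IsPath.nil, rfl, ?_, by simp [ha]⟩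
    intro x hx
    simp only [SimpleGraph.Walk.support_nil, List.mem_singleton] at hx
    subst hx; exact haT
  | succ j ihj =>
    intro hj
    obtain ⟨v, p, hp, hl, hsup, hpar⟩ := ihj (Nat.le_of_succ_le hj)
    have hvT : v ∈ T := hsup v p.start_mem_support
    have hdeg : k + 1 ≤ (T.filter (G.Adj v)).card := hT v hvT
    have hsupcard : p.support.toFinset.card ≤ j + 1 := by
      calc p.support.toFinset.card ≤ p.support.length := p.support.toFinset_card_le
        _ = j + 1 := by rw [SimpleGraph.Walk.length_support, hl]
    have hne : ((T.filter (G.Adj v)) \ p.support.toFinset).Nonempty := by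
      rw [Finset.nonempty_iff_ne_empty]
      intro hemp
      rw [Finset.sdiff_eq_empty_iff_subset] at hemp
      have := Finset.card_le_card hemp
      omega
    obtain ⟨w, hw⟩ := hne
    rw [Finset.mem_sdiff, Finset.mem_filter] at hw
    obtain ⟨⟨hwT, hadj⟩, hwns⟩ := hw
    have hwns' : w ∉ p.support := fun hmem => hwns (List.mem_toFinset.mpr hmem)
    refine ⟨w, SimpleGraph.Walk.cons hadj.symm p, hp.cons hwns', ?_, ?_, ?_⟩
    · rw [SimpleGraph.Walk.length_cons, hl]
    · intro x hx
      rw [SimpleGraph.Walk.support_cons, List.mem_cons] at hx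
      rcases hx with hx | hx
      · subst hx; exact hwT
      · exact hsup x hx
    · rcases hpart v w hadj with ⟨hvA, hwB⟩ | ⟨hvB, hwA⟩
      · have hje : Even j := hpar.mp hvA
        have hwnA : w ∉ A := Finset.disjoint_right.mp hdisj hwB
        simp [hwnA, Nat.even_add_one, hje]
      · have hvnA : v ∉ A := Finset.disjoint_right.mp hdisj hvB
        have hjo : ¬ Even j := fun h => hvnA (hpar.mpr h)
        simp [hwA, Nat.even_add_one, hjo]

/-- Bipartite Erdős–Gallai-type theorem (Gyárfás, Rousseau, Schelp): if `G` is a bipartite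
graph with parts `A` and `B`, `|A| ≥ |B| ≥ k`, and more than `(|A|+|B|)·k` edges, then `G`
contains a path with `k` edges; moreover when `k` is even the path can be chosen with both
endpoints in the larger side `A`. -/
theorem bipartite_erdos_gallai_path {V : Type} [Fintype V] [DecidableEq V]
    (G : SimpleGraph V) [DecidableRel G.Adj] (A B : Finset V) (k : ℕ)
    (hpart : ∀ u v : V, G.Adj u v → (u ∈ A ∧ v ∈ B) ∨ (u ∈ B ∧ v ∈ A))
    (hdisj : Disjoint A B)
    (hBk : k ≤ B.card) (hAB : B.card ≤ A.card)
    (he : (A.card + B.card) * k < G.edgeFinset.card) :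
    ∃ (u v : V) (p : G.Walk u v), p.IsPath ∧ p.length = k ∧
      (Even k → u ∈ A ∧ v ∈ A) := by
  classical
  have hnb : ∀ v : V, ((A ∪ B).filter (G.Adj v)) = G.neighborFinset v := by
    intro v
    ext x
    simp only [Finset.mem_filter, Finset.mem_union, SimpleGraph.mem_neighborFinset]
    constructor
    · rintro ⟨_, h⟩; exact h
    · intro h
      rcases hpart v x h with ⟨_, hx⟩ | ⟨_, hx⟩
      · exact ⟨Or.inr hx, h⟩
      · exact ⟨Or.inl hx, h⟩
  have hdeg0 : ∀ v : V, v ∉ A ∪ B → G.degree v = 0 := by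
    intro v hv
    rw [← SimpleGraph.card_neighborFinset_eq_degree, Finset.card_eq_zero]
    ext x
    simp only [SimpleGraph.mem_neighborFinset, Finset.notMem_empty, iff_false]
    intro h
    rcases hpart v x h with ⟨hvA, _⟩ | ⟨hvB, _⟩
    · exact hv (Finset.mem_union_left _ hvA)
    · exact hv (Finset.mem_union_right _ hvB)
  have hsum : ∑ v ∈ A ∪ B, ((A ∪ B).filter (G.Adj v)).card = 2 * G.edgeFinset.card := by
    have h1 : ∑ v ∈ A ∪ B, ((A ∪ B).filter (G.Adj v)).card = ∑ v ∈ A ∪ B, G.degree v := by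
      apply Finset.sum_congr rfl
      intro v _
      rw [hnb v, SimpleGraph.card_neighborFinset_eq_degree]
    rw [h1, ← SimpleGraph.sum_degrees_eq_twice_card_edges]
    exact Finset.sum_subset (Finset.subset_univ _) (fun v _ hv => hdeg0 v hv)
  have hcardU : (A ∪ B).card = A.card + B.card := Finset.card_union_of_disjoint hdisj
  have hS : 2 * k * (A ∪ B).card < ∑ v ∈ A ∪ B, ((A ∪ B).filter (G.Adj v)).card := by
    rw [hsum, hcardU]
    calc 2 * k * (A.card + B.card) = 2 * ((A.card + B.card) * k) := by ring
      _ < 2 * G.edgeFinset.card := by omega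
  obtain ⟨T, hTsub, hTne, hT⟩ := bip_eg_core G k (A ∪ B) hS
  obtain ⟨t, htT⟩ := hTne
  have hdt : k + 1 ≤ (T.filter (G.Adj t)).card := hT t htT
  have hfil : (T.filter (G.Adj t)).Nonempty := Finset.card_pos.mp (by omega)
  obtain ⟨w, hw⟩ := hfil
  rw [Finset.mem_filter] at hw
  obtain ⟨hwT, htw⟩ := hw
  obtain ⟨a, haA, haT⟩ : ∃ a, a ∈ A ∧ a ∈ T := by
    rcases hpart t w htw with ⟨htA, _⟩ | ⟨_, hwA⟩
    · exact ⟨t, htA, htT⟩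
    · exact ⟨w, hwA, hwT⟩
  obtain ⟨v, p, hp, hl, _, hpar⟩ :=
    bip_eg_path G A B k hpart hdisj T hT a haA haT k le_rfl
  exact ⟨v, a, p, hp, hl, fun hek => ⟨hpar.mpr hek, haA⟩⟩
end

section
/- Let k ≥ 2, ε > 0, and let G be a C_{2k-1}-free graph on n ≥ 4k/ε vertices with minimum degree at least (1/(2k-1) + ε)n. Then for every vertex v of G and every nonempty subset M of the neighbourhood N(v), the average degree of the induced subgraph G[M] is less than 2k, i.e., 2e(G[M])/|M| < 2k. -/
/-!
A path with `2k - 3` edges inside `N(v)` closes through `v` into a cycle of length `2k - 1`, so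
every path in `G[M]` has at most `2k - 4` edges, and the Erdős–Gallai theorem gives
`2 e(G[M]) ≤ (2k - 4) |M|`.
-/

open Finset

namespace SimpleGraph

variable {V : Type*} {G : SimpleGraph V}

namespace Walk

lemma IsPath.cons_isCycle_of_length_ne_one {u v : V} {p : G.Walk v u} (hp : p.IsPath)
    (h : G.Adj u v) (hlen : p.length ≠ 1) : (cons h p).IsCycle :=
  (cons_isCycle_iff p h).2 ⟨hp, fun he => hlen (hp.length_eq_one_of_mem_edges (Sym2.eq_swap ▸ he))⟩

lemma IsPath.exists_isCycle_length_eq_add_two_of_forall_adj {v x y : V} {p : G.Walk x y}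
    (hp : p.IsPath) (hpv : ∀ z ∈ p.support, G.Adj v z) {ℓ : ℕ} (hℓ : 1 ≤ ℓ) (hlen : ℓ ≤ p.length) :
    ∃ c : G.Walk v v, c.IsCycle ∧ c.length = ℓ + 2 := by
  have hqv : ∀ z ∈ (p.take ℓ).support, G.Adj v z := fun z hz =>
    hpv z (List.mem_of_mem_take (support_take p ℓ ▸ hz))
  have hq : ((p.take ℓ).concat (hqv _ (end_mem_support _)).symm).IsPath :=
    (hp.take ℓ).concat (fun hv => G.irrefl (hqv v hv)) _
  refine ⟨cons (hqv x (start_mem_support _)) _, hq.cons_isCycle_of_length_ne_one _ ?_, ?_⟩ <;>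
    simp [not_nil_iff_lt_length] <;> omega

lemma IsCycle.exists_isPath_length_add_one_eq {u w : V} {c : G.Walk u u} (hc : c.IsCycle)
    (hw : w ∈ c.support) :
    ∃ z, ∃ q : G.Walk z w, q.IsPath ∧ q.length + 1 = c.length ∧ ∀ t ∈ q.support, t ∈ c.support := by
  classical
  have hc' := hc.rotate hw
  refine ⟨_, (c.rotate w hw).reverse.tail, hc'.reverse.isPath_tail, ?_, fun t ht => ?_⟩
  · rw [length_tail_add_one hc'.reverse.not_nil, length_reverse, length_rotate]
  · rw [support_tail_of_not_nil _ hc'.reverse.not_nil] at ht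
    simpa [mem_support_rotate_iff] using List.mem_of_mem_tail ht

/-- Pósa rotation: the cycle `x ⋯ p i ~ y ⋯ p (i + 1) ~ x`. -/
lemma IsPath.exists_isCycle_of_adj_getVert {x y : V} {p : G.Walk x y} (hp : p.IsPath) {i : ℕ}
    (hi : i < p.length) (h2 : 2 ≤ p.length) (hx : G.Adj x (p.getVert (i + 1)))
    (hy : G.Adj y (p.getVert i)) :
    ∃ c : G.Walk x x, c.IsCycle ∧ c.length = p.length + 1 ∧ ∀ z, z ∈ c.support ↔ z ∈ p.support := by
  set q := (p.take i).append (cons hy.symm (p.drop (i + 1)).reverse)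
  have hperm : q.support.Perm p.support := by
    have hmin : min (i + 1) p.length = i + 1 := by omega
    simp only [q, support_append, support_cons, support_reverse, List.tail_cons, support_take,
      drop_support_eq_support_drop_min, hmin]
    exact ((List.reverse_perm _).append_left _).trans (by rw [List.take_append_drop])
  have hq : q.IsPath := IsPath.mk' (hperm.nodup_iff.2 hp.support_nodup)
  have hqlen : q.length = p.length := by simp [q]; omega
  refine ⟨cons hx q.reverse, hq.reverse.cons_isCycle_of_length_ne_one hx (by simp; omega),
    by simp [hqlen], fun z => ?_⟩
  simp only [support_cons, List.mem_cons, support_reverse, List.mem_reverse, hperm.mem_iff]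
  exact ⟨fun h => h.elim (· ▸ p.start_mem_support) id, Or.inr⟩

lemma IsPath.exists_isPath_of_adj_getVert {x y w : V} {p : G.Walk x y} (hp : p.IsPath) {i : ℕ}
    (hi : i < p.length) (hx : G.Adj x (p.getVert (i + 1))) (hy : G.Adj y (p.getVert i))
    (hw : w ∈ p.support) :
    ∃ z, ∃ q : G.Walk z w, q.IsPath ∧ q.length = p.length ∧ ∀ t ∈ q.support, t ∈ p.support := by
  by_cases hwy : w = y
  · subst hwy
    exact ⟨x, p, hp, rfl, fun _ => id⟩
  by_cases hwx : w = x
  · subst hwx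
    exact ⟨y, p.reverse, hp.reverse, length_reverse _, by simp⟩
  have h2 : 2 ≤ p.length := by
    obtain ⟨j, rfl, hj⟩ := mem_support_iff_exists_getVert.1 hw
    have : j ≠ 0 := by rintro rfl; exact hwx (getVert_zero p)
    have : j ≠ p.length := by rintro rfl; exact hwy (getVert_length p)
    omega
  obtain ⟨c, hc, hclen, hcp⟩ := hp.exists_isCycle_of_adj_getVert hi h2 hx hy
  obtain ⟨z, q, hq, hqlen, hqc⟩ := hc.exists_isPath_length_add_one_eq ((hcp w).2 hw)
  exact ⟨z, q, hq, by omega, fun t ht => (hcp t).1 (hqc t ht)⟩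

end Walk

lemma exists_isPath_forall_isPath_length_le_length_within {S : Finset V} (hS : S.Nonempty) {m : ℕ}
    (h : ∀ (x y : V) (p : G.Walk x y), p.IsPath → (∀ z ∈ p.support, z ∈ S) → p.length ≤ m) :
    ∃ (x y : V) (p : G.Walk x y), p.IsPath ∧ (∀ z ∈ p.support, z ∈ S) ∧
      ∀ (a b : V) (q : G.Walk a b), q.IsPath → (∀ z ∈ q.support, z ∈ S) → q.length ≤ p.length := by
  classical
  let P n := ∃ (x y : V) (p : G.Walk x y), p.IsPath ∧ (∀ z ∈ p.support, z ∈ S) ∧ p.length = n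
  obtain ⟨x₀, hx₀⟩ := hS
  obtain ⟨x, y, p, hp, hpS, hlen⟩ : P (Nat.findGreatest P m) :=
    Nat.findGreatest_spec (Nat.zero_le m) ⟨x₀, x₀, .nil, by simp, by simpa, rfl⟩
  exact ⟨x, y, p, hp, hpS, fun a b q hq hqS =>
    hlen ▸ Nat.le_findGreatest (h a b q hq hqS) ⟨a, b, q, hq, hqS, rfl⟩⟩

lemma Walk.mem_support_of_adj_of_forall_isPath_length_le {S : Finset V} {x y w : V} {p : G.Walk x y}
    (hp : p.IsPath) (hpS : ∀ z ∈ p.support, z ∈ S)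
    (hmax : ∀ (a b : V) (q : G.Walk a b), q.IsPath → (∀ z ∈ q.support, z ∈ S) →
      q.length ≤ p.length)
    (hw : w ∈ S) (hxw : G.Adj x w) : w ∈ p.support := by
  by_contra hwp
  have := hmax w y (.cons hxw.symm p) (hp.cons hwp) (by simpa [hw] using hpS)
  simp at this

section degreeIn

variable (G) [DecidableRel G.Adj]

def degreeIn (S : Finset V) (x : V) : ℕ := #{y ∈ S | G.Adj x y}

variable {G}

lemma degreeIn_lt_card {S : Finset V} {x : V} (hx : x ∈ S) : G.degreeIn S x < #S :=
  card_lt_card ⟨filter_subset _ _, fun h => G.irrefl (mem_filter.1 (h hx)).2⟩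

lemma Walk.exists_adj_getVert_of_length_lt_degreeIn_add {S : Finset V} {x y : V} (p : G.Walk x y)
    (hx : ∀ w ∈ S, G.Adj x w → w ∈ p.support) (hy : ∀ w ∈ S, G.Adj y w → w ∈ p.support)
    (hlt : p.length < G.degreeIn S x + G.degreeIn S y) :
    ∃ i < p.length, G.Adj x (p.getVert (i + 1)) ∧ G.Adj y (p.getVert i) := by
  classical
  set A := {i ∈ range p.length | G.Adj x (p.getVert (i + 1))}
  set B := {i ∈ range p.length | G.Adj y (p.getVert i)}
  have hA : G.degreeIn S x ≤ #A := by
    refine (card_le_card fun w hw => ?_).trans (card_image_le (f := fun i => p.getVert (i + 1)))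
    obtain ⟨hwS, hxw⟩ := mem_filter.1 hw
    obtain ⟨j, rfl, hj⟩ := Walk.mem_support_iff_exists_getVert.1 (hx w hwS hxw)
    obtain ⟨i, rfl⟩ : ∃ i, j = i + 1 :=
      Nat.exists_eq_succ_of_ne_zero fun h => by simp [h] at hxw
    exact mem_image.2 ⟨i, mem_filter.2 ⟨mem_range.2 (by omega), hxw⟩, rfl⟩
  have hB : G.degreeIn S y ≤ #B := by
    refine (card_le_card fun w hw => ?_).trans (card_image_le (f := p.getVert))
    obtain ⟨hwS, hyw⟩ := mem_filter.1 hw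
    obtain ⟨j, rfl, hj⟩ := Walk.mem_support_iff_exists_getVert.1 (hy w hwS hyw)
    have : j ≠ p.length := fun h => by simp [h] at hyw
    exact mem_image.2 ⟨j, mem_filter.2 ⟨mem_range.2 (by omega), hyw⟩, rfl⟩
  obtain ⟨i, hi⟩ := inter_nonempty_of_card_lt_card_add_card (filter_subset _ _) (filter_subset _ _)
    (by rw [card_range]; omega : #(range p.length) < #A + #B)
  simp only [mem_inter, mem_filter, mem_range] at hi
  exact ⟨i, hi.1.1, hi.1.2, hi.2.2⟩

/-- The vertex set of a longest path in `S` is closed in `S`: an outside neighbour of a vertex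
`w` of the path could be attached to a path of the same length ending at `w`. -/
lemma exists_closed_subset_card_le_of_lt_two_mul_degreeIn {S : Finset V} (hS : S.Nonempty) {m : ℕ}
    (h : ∀ (x y : V) (p : G.Walk x y), p.IsPath → (∀ z ∈ p.support, z ∈ S) → p.length ≤ m)
    (hdeg : ∀ x ∈ S, m < 2 * G.degreeIn S x) :
    ∃ T ⊆ S, T.Nonempty ∧ #T ≤ m + 1 ∧ ∀ a ∈ T, ∀ b ∈ S, G.Adj a b → b ∈ T := by
  classical
  obtain ⟨x, y, p, hp, hpS, hmax⟩ := exists_isPath_forall_isPath_length_le_length_within hS h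
  have hx : ∀ w ∈ S, G.Adj x w → w ∈ p.support := fun _ =>
    Walk.mem_support_of_adj_of_forall_isPath_length_le hp hpS hmax
  have hy : ∀ w ∈ S, G.Adj y w → w ∈ p.support := by
    simpa using fun _ => Walk.mem_support_of_adj_of_forall_isPath_length_le hp.reverse
      (by simpa using hpS) (by simpa using hmax)
  have hL := h x y p hp hpS
  obtain ⟨i, hi, hxi, hyi⟩ := p.exists_adj_getVert_of_length_lt_degreeIn_add hx hy (by
    have := hdeg x (hpS x p.start_mem_support)
    have := hdeg y (hpS y p.end_mem_support)
    omega)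
  refine ⟨p.support.toFinset, fun z hz => hpS z (List.mem_toFinset.1 hz), ⟨x, by simp⟩,
    (List.toFinset_card_le _).trans (by rw [Walk.length_support]; omega), fun a ha b hb hab => ?_⟩
  by_contra hbp
  obtain ⟨z, q, hq, hqlen, hqp⟩ :=
    hp.exists_isPath_of_adj_getVert hi hxi hyi (List.mem_toFinset.1 ha)
  have := hmax z b (q.concat hab) (hq.concat (fun h => hbp (List.mem_toFinset.2 (hqp _ h))) hab)
    (by simpa [hb, or_imp, forall_and] using fun t ht => hpS t (hqp t ht))
  simp at this
  omega

variable [DecidableEq V]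

lemma sum_degreeIn_insert {S : Finset V} {x : V} (hx : x ∉ S) :
    ∑ y ∈ insert x S, G.degreeIn (insert x S) y = ∑ y ∈ S, G.degreeIn S y + 2 * G.degreeIn S x := by
  have hself : G.degreeIn (insert x S) x = G.degreeIn S x := by
    simp [degreeIn, filter_insert]
  have hother : ∀ y ∈ S,
      G.degreeIn (insert x S) y = G.degreeIn S y + if G.Adj x y then 1 else 0 := by
    intro y hy
    have hxy : x ∉ {z ∈ S | G.Adj y z} := fun h => hx (mem_filter.1 h).1
    by_cases hadj : G.Adj x y
    · simp [degreeIn, filter_insert, hadj, hadj.symm, hxy]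
    · simp [degreeIn, filter_insert, hadj, G.adj_comm y x]
  rw [sum_insert hx, hself, sum_congr rfl hother, sum_add_distrib, ← card_filter]
  simp only [degreeIn]
  ring

lemma sum_degreeIn_eq_add_of_closed {S T : Finset V} (hTS : T ⊆ S)
    (hT : ∀ a ∈ T, ∀ b ∈ S, G.Adj a b → b ∈ T) :
    ∑ x ∈ S, G.degreeIn S x = ∑ x ∈ T, G.degreeIn T x + ∑ x ∈ S \ T, G.degreeIn (S \ T) x := by
  have hin : ∀ a ∈ T, G.degreeIn S a = G.degreeIn T a := fun a ha => by
    unfold degreeIn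
    congr 1
    ext b
    simp only [mem_filter]
    exact ⟨fun h => ⟨hT a ha b h.1 h.2, h.2⟩, fun h => ⟨hTS h.1, h.2⟩⟩
  have hout : ∀ a ∈ S \ T, G.degreeIn S a = G.degreeIn (S \ T) a := fun a ha => by
    rw [mem_sdiff] at ha
    unfold degreeIn
    congr 1
    ext b
    simp only [mem_filter, mem_sdiff]
    exact ⟨fun h => ⟨⟨h.1, fun hb => ha.2 (hT b hb a ha.1 h.2.symm)⟩, h.2⟩, fun h => ⟨h.1.1, h.2⟩⟩
  rw [← sum_sdiff hTS, add_comm, sum_congr rfl hin, sum_congr rfl hout]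

/-- Erdős–Gallai: a vertex of degree at most `m / 2` is deleted, otherwise a closed set of at most
`m + 1` vertices is split off. -/
theorem sum_degreeIn_le_mul_card {m : ℕ} (S : Finset V)
    (h : ∀ (x y : V) (p : G.Walk x y), p.IsPath → (∀ z ∈ p.support, z ∈ S) → p.length ≤ m) :
    ∑ x ∈ S, G.degreeIn S x ≤ m * #S := by
  induction S using Finset.strongInduction with
  | H S ih =>
  rcases S.eq_empty_or_nonempty with rfl | hS
  · simp
  by_cases hlow : ∃ x ∈ S, 2 * G.degreeIn S x ≤ m
  · obtain ⟨x, hx, hxm⟩ := hlow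
    have hrec := ih _ (erase_ssubset hx) fun a b p hp hpS =>
      h a b p hp fun z hz => mem_of_mem_erase (hpS z hz)
    rw [← insert_erase hx, sum_degreeIn_insert (notMem_erase x S), card_insert_of_notMem
      (notMem_erase x S)]
    have : G.degreeIn (S.erase x) x ≤ G.degreeIn S x :=
      card_le_card (filter_subset_filter _ (erase_subset x S))
    linarith
  · push Not at hlow
    obtain ⟨T, hTS, hTne, hTm, hTclosed⟩ :=
      exists_closed_subset_card_le_of_lt_two_mul_degreeIn hS h hlow
    have hrec := ih _ (sdiff_ssubset hTS hTne) fun a b p hp hpS =>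
      h a b p hp fun z hz => (mem_sdiff.1 (hpS z hz)).1
    have hTsum : ∑ x ∈ T, G.degreeIn T x ≤ m * #T :=
      (sum_le_card_nsmul _ _ (#T - 1) fun x hx => Nat.le_sub_one_of_lt (degreeIn_lt_card hx)).trans
        (by rw [smul_eq_mul, mul_comm]; exact Nat.mul_le_mul_right _ (by omega))
    rw [sum_degreeIn_eq_add_of_closed hTS hTclosed, ← card_sdiff_add_card_eq_card hTS]
    linarith

variable [Fintype V]

lemma two_mul_card_edges_within_eq_sum_degreeIn (S : Finset V) :
    2 * #{e ∈ G.edgeFinset | ∀ x ∈ e, x ∈ S} = ∑ x ∈ S, G.degreeIn S x := by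
  let H : SimpleGraph V :=
    { Adj a b := G.Adj a b ∧ a ∈ S ∧ b ∈ S
      symm := ⟨fun _ _ h => ⟨h.1.symm, h.2.2, h.2.1⟩⟩ }
  have hedges : H.edgeFinset = {e ∈ G.edgeFinset | ∀ x ∈ e, x ∈ S} := by
    ext e
    induction e with
    | h a b => simp [H, and_comm]
  have hdeg : ∀ x, H.degree x = if x ∈ S then G.degreeIn S x else 0 := by
    intro x
    rw [← card_neighborFinset_eq_degree, neighborFinset_eq_filter]
    split_ifs with hx <;> simp [H, degreeIn, hx, and_comm]
    congr 1; ext; simp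
  rw [← hedges, ← sum_degrees_eq_twice_card_edges]
  simp [hdeg]

end degreeIn

end SimpleGraph

theorem neighbourhood_avg_degree_lt_general {V : Type} [Fintype V] [DecidableEq V]
    (G : SimpleGraph V) [DecidableRel G.Adj] (k : ℕ) (hk : 2 ≤ k)
    (hfree : ¬ ∃ (v : V) (w : G.Walk v v), w.IsCycle ∧ w.length = 2*k-1)
    (v : V) (M : Finset V) (hM : M.Nonempty) (hMv : M ⊆ G.neighborFinset v) :
    (2 * (G.edgeFinset.filter fun e => ∀ x ∈ e, x ∈ M).card : ℝ) / M.card < 2*k := by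
  have hpath : ∀ (x y : V) (p : G.Walk x y), p.IsPath → (∀ z ∈ p.support, z ∈ M) →
      p.length ≤ 2 * k - 4 := by
    intro x y p hp hpM
    by_contra! hlong
    obtain ⟨c, hc, hclen⟩ := hp.exists_isCycle_length_eq_add_two_of_forall_adj
      (fun z hz => (G.mem_neighborFinset v z).1 (hMv (hpM z hz))) (ℓ := 2 * k - 3)
      (by omega) (by omega)
    exact hfree ⟨v, c, hc, by omega⟩
  have hedges : 2 * #{e ∈ G.edgeFinset | ∀ x ∈ e, x ∈ M} < 2 * k * #M := calc
    _ = ∑ x ∈ M, G.degreeIn M x := G.two_mul_card_edges_within_eq_sum_degreeIn M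
    _ ≤ (2 * k - 4) * #M := G.sum_degreeIn_le_mul_card M hpath
    _ < 2 * k * #M := Nat.mul_lt_mul_of_pos_right (by omega) hM.card_pos
  rw [div_lt_iff₀ (by exact_mod_cast hM.card_pos)]
  exact_mod_cast hedges

/-- Let `k ≥ 2`, `ε > 0`, and let `G` be a `C_{2k-1}`-free graph on `n ≥ 4k/ε` vertices with
minimum degree at least `(1/(2k-1) + ε)n`.  Then for every vertex `v` and every nonempty
subset `M` of the neighbourhood `N(v)`, the average degree of `G[M]` is less than `2k`,
i.e. `2·e(G[M])/|M| < 2k`. -/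
theorem neighbourhood_avg_degree_lt {V : Type} [Fintype V] [DecidableEq V]
    (G : SimpleGraph V) [DecidableRel G.Adj] (k : ℕ) (hk : 2 ≤ k) (ε : ℝ) (hε : 0 < ε)
    (hn : (4 * k : ℝ) / ε ≤ Fintype.card V)
    (hfree : ¬ ∃ (v : V) (w : G.Walk v v), w.IsCycle ∧ w.length = 2*k-1)
    (hdeg : ∀ v : V, ((1 : ℝ) / (2*k - 1) + ε) * Fintype.card V ≤ G.degree v)
    (v : V) (M : Finset V) (hM : M.Nonempty) (hMv : M ⊆ G.neighborFinset v) :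
    (2 * (G.edgeFinset.filter fun e => ∀ x ∈ e, x ∈ M).card : ℝ) / M.card < 2*k :=
  neighbourhood_avg_degree_lt_general G k hk hfree v M hM hMv
end

section
/- Let k ≥ 2, ε > 0, and let G be a C_{2k-1}-free graph on n ≥ 4k/ε vertices with minimum degree at least (1/(2k-1) + ε)n. If two vertices u, v of G are joined by a path of odd length at most 2k-3, then u and v have fewer than 5k² common neighbours. -/
/-!
Suppose `u` and `v` had `5k²` common neighbours, and let `A` be those off the path `p`, of odd
length `ℓ`. A path of even length `2t = 2k - 3 - ℓ` avoiding `p` and joining two vertices of `A`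
closes up with `p` into a `C_{2k-1}`, so it suffices to find one.

Look at the edges of `G - p` that meet `A`. Either `A` spans many of them, or the minimum degree
forces many of them to leave `A`; in both cases some vertex set carries average degree above
`2(2t + 1)`, hence contains a subgraph of minimum degree `2t + 2`, hence a cycle of length
`> 2t + 2` each of whose edges meets `A`. Of any two consecutive vertices of this cycle one lies
in `A`, and a parity argument then gives two vertices of `A` at distance exactly `2t` along it.
-/

open Finset

theorem exists_and_add_two_mul_of_forall_or_add_one {Q : ℕ → Prop}
    (hQ : ∀ i, Q i ∨ Q (i + 1)) (t : ℕ) : ∃ i, Q i ∧ Q (i + 2 * t) := by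
  by_contra! h
  -- otherwise `Q` never holds at two consecutive places, hence alternates
  have step : ∀ i, Q i → Q (i + 2) := by
    intro i hi
    have hnext : Q (i + 1 + 2 * t) := by
      simpa only [add_right_comm] using (hQ (i + 2 * t)).resolve_left (h i hi)
    exact (hQ (i + 1)).resolve_left fun h' => h _ h' hnext
  have iter : ∀ j i, Q i → Q (i + 2 * j) := by
    intro j
    induction j with
    | zero => simp
    | succ j ih => intro i hi; simpa [Nat.mul_succ, ← add_assoc] using step _ (ih i hi)
  obtain ⟨i, hi⟩ : ∃ i, Q i := (hQ 0).elim (⟨0, ·⟩) (⟨1, ·⟩)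
  exact h i hi (iter t i hi)

namespace SimpleGraph

variable {V : Type*}

section DenseCore

variable [DecidableEq V] {H : SimpleGraph V} [DecidableRel H.Adj]

lemma sum_card_adj_le_sum_card_adj_erase_add {W : Finset V} {x : V} (hx : x ∈ W) :
    ∑ y ∈ W, #{z ∈ W | H.Adj y z} ≤
      ∑ y ∈ W.erase x, #{z ∈ W.erase x | H.Adj y z} + 2 * #{z ∈ W | H.Adj x z} := by
  have hy : ∀ y ∈ W.erase x, #{z ∈ W | H.Adj y z} ≤
      #{z ∈ W.erase x | H.Adj y z} + if H.Adj x y then 1 else 0 := by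
    intro y _
    rw [filter_erase]
    split_ifs with h
    · have := pred_card_le_card_erase (s := {z ∈ W | H.Adj y z}) (a := x)
      omega
    · rw [erase_eq_of_notMem (by simp [H.adj_comm, h]), add_zero]
  calc ∑ y ∈ W, #{z ∈ W | H.Adj y z}
      = #{z ∈ W | H.Adj x z} + ∑ y ∈ W.erase x, #{z ∈ W | H.Adj y z} :=
        (add_sum_erase _ _ hx).symm
    _ ≤ #{z ∈ W | H.Adj x z} + ∑ y ∈ W.erase x,
          (#{z ∈ W.erase x | H.Adj y z} + if H.Adj x y then 1 else 0) := by
        gcongr with y hy'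
        exact hy y hy'
    _ ≤ _ := by
        rw [sum_add_distrib, ← card_filter]
        have : #{z ∈ W.erase x | H.Adj x z} ≤ #{z ∈ W | H.Adj x z} :=
          card_le_card (filter_subset_filter _ (erase_subset x W))
        omega

lemma exists_nonempty_subset_forall_lt_card_adj (m : ℕ) {W : Finset V}
    (hW : 2 * m * #W < ∑ x ∈ W, #{y ∈ W | H.Adj x y}) :
    ∃ U ⊆ W, U.Nonempty ∧ ∀ x ∈ U, m < #{y ∈ U | H.Adj x y} := by
  -- a minimal dense `U` works: deleting a vertex of degree `≤ m` would keep it dense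
  obtain ⟨U, hU, hmin⟩ := exists_min_image
    {U ∈ W.powerset | 2 * m * #U < ∑ x ∈ U, #{y ∈ U | H.Adj x y}} card ⟨W, by simp [hW]⟩
  rw [mem_filter, mem_powerset] at hU
  refine ⟨U, hU.1, nonempty_iff_ne_empty.mpr ?_, fun x hx => ?_⟩
  · rintro rfl
    simp at hU
  · by_contra! hx'
    have hrem := sum_card_adj_le_sum_card_adj_erase_add (H := H) hx
    have hcard := card_erase_add_one hx
    have := hmin (U.erase x) (by
      rw [mem_filter, mem_powerset]
      refine ⟨(erase_subset x U).trans hU.1, ?_⟩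
      rw [← hcard] at hU
      nlinarith [hU.2])
    omega

end DenseCore

section Cycles

variable {H : SimpleGraph V}

open Walk

lemma exists_isPath_forall_adj_mem_support [DecidableEq V] {U : Finset V} (hU : U.Nonempty) :
    ∃ (a b : V) (p : H.Walk a b), p.IsPath ∧ (∀ x ∈ p.support, x ∈ U) ∧
      ∀ y ∈ U, H.Adj b y → y ∈ p.support := by
  by_contra! h
  have hlong : ∀ n, ∃ (a b : V) (p : H.Walk a b), p.IsPath ∧ (∀ x ∈ p.support, x ∈ U) ∧
      p.length = n := by
    intro n
    induction n with
    | zero =>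
      obtain ⟨a, ha⟩ := hU
      exact ⟨a, a, .nil, .nil, by simpa, rfl⟩
    | succ n ih =>
      obtain ⟨a, b, p, hp, hpU, rfl⟩ := ih
      obtain ⟨y, hyU, hby, hy⟩ := h a b p hp hpU
      refine ⟨a, y, p.concat hby, hp.concat hy hby, fun x hx => ?_, by simp⟩
      rw [support_concat, List.mem_append, List.mem_singleton] at hx
      exact hx.elim (hpU x) (· ▸ hyU)
  obtain ⟨a, b, p, hp, hpU, hlen⟩ := hlong #U
  have := card_le_card (s := p.support.toFinset) (t := U) fun x hx => hpU x (by simpa using hx)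
  rw [List.toFinset_card_of_nodup hp.support_nodup, length_support] at this
  omega

lemma exists_isCycle_lt_length [DecidableEq V] [DecidableRel H.Adj] {U : Finset V} {m : ℕ}
    (hm : 2 ≤ m) (hU : U.Nonempty) (hdeg : ∀ x ∈ U, m ≤ #{y ∈ U | H.Adj x y}) :
    ∃ (v : V) (c : H.Walk v v), c.IsCycle ∧ m < c.length ∧ ∀ x ∈ c.support, x ∈ U := by
  obtain ⟨a, b, p, hp, hpU, hmax⟩ := exists_isPath_forall_adj_mem_support (H := H) hU
  have hq : p.reverse.IsPath := hp.reverse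
  -- the `m` neighbours of `b` lie on the path at positions `≥ 1`, so one lies at position `≥ m`
  obtain ⟨j, hmj, hjq, hadj⟩ :
      ∃ j, m ≤ j ∧ j ≤ p.reverse.length ∧ H.Adj (p.reverse.getVert j) b := by
    by_contra! hj
    have hsub : {y ∈ U | H.Adj b y} ⊆ (Ico 1 m).image p.reverse.getVert := by
      intro y hy
      rw [mem_filter] at hy
      obtain ⟨i, rfl, hi⟩ := mem_support_iff_exists_getVert.mp
        (by simpa using hmax y hy.1 hy.2 : y ∈ p.reverse.support)
      refine mem_image.mpr ⟨i, mem_Ico.mpr ⟨Nat.pos_of_ne_zero ?_, ?_⟩, rfl⟩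
      · rintro rfl
        exact H.loopless.irrefl b (by simpa using hy.2)
      · by_contra! him
        exact hj i him hi hy.2.symm
    have := (card_le_card hsub).trans card_image_le
    have := hdeg b (hpU b p.end_mem_support)
    simp only [Nat.card_Ico] at *
    omega
  have hlen : (p.reverse.take j).length = j := by rw [take_length]; omega
  refine ⟨b, (p.reverse.take j).concat hadj, ?_, by simp [hlen]; omega, fun x hx => ?_⟩
  · rw [concat_eq_append]
    refine (hq.take j).isCycle_append (by simp [hadj.ne]) ?_ (Or.inl (by omega))
    have hnd := (hq.take j).support_nodup
    rw [← cons_tail_support] at hnd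
    simpa using (List.nodup_cons.mp hnd).1
  · rw [support_concat, List.mem_append, List.mem_singleton, support_take] at hx
    rcases hx with hx | rfl
    · exact hpU x (by simpa using List.mem_of_mem_take hx)
    · exact hpU _ p.end_mem_support

lemma Walk.adj_getVert_mod {v : V} (c : H.Walk v v) (hc : 0 < c.length) (i : ℕ) :
    H.Adj (c.getVert (i % c.length)) (c.getVert ((i + 1) % c.length)) := by
  have hlt := Nat.mod_lt i hc
  have : c.getVert ((i + 1) % c.length) = c.getVert (i % c.length + 1) := by
    rw [← Nat.mod_add_mod]
    rcases (show i % c.length + 1 ≤ c.length from hlt).lt_or_eq with h | h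
    · rw [Nat.mod_eq_of_lt h]
    · rw [h, Nat.mod_self, getVert_zero, getVert_length]
  exact this ▸ c.adj_getVert_succ hlt

lemma Walk.getVert_append_self {v : V} (c : H.Walk v v) {j : ℕ} (hj : j < 2 * c.length) :
    (c.append c).getVert j = c.getVert (j % c.length) := by
  rw [getVert_append]
  split_ifs with h
  · rw [Nat.mod_eq_of_lt h]
  · rw [Nat.mod_eq_sub_mod (not_lt.mp h), Nat.mod_eq_of_lt (by omega)]

lemma Walk.IsCycle.exists_isPath_getVert_mod {v : V} {c : H.Walk v v} (hc : c.IsCycle) {s d : ℕ}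
    (hs : s < c.length) (hd : d < c.length) :
    ∃ q : H.Walk (c.getVert s) (c.getVert ((s + d) % c.length)),
      q.IsPath ∧ q.length = d ∧ ∀ x ∈ q.support, x ∈ c.support := by
  set L := c.length
  -- going around the cycle twice lets the arc run past the base point
  set q := ((c.append c).drop s).take d
  have hlen : q.length = d := by simp [q, take_length, drop_length]; omega
  have hget : ∀ r ≤ d, q.getVert r = c.getVert ((s + r) % L) := fun r hr => by
    rw [take_getVert, drop_getVert, min_eq_right hr, getVert_append_self _ (by omega)]
  have hstart : (c.append c).getVert s = c.getVert s := by
    rw [getVert_append_self _ (by omega), Nat.mod_eq_of_lt hs]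
  have hend : ((c.append c).drop s).getVert d = c.getVert ((s + d) % L) := by
    rw [drop_getVert, getVert_append_self _ (by omega)]
  refine ⟨q.copy hstart hend, ?_, by simpa using hlen, fun x hx => ?_⟩
  · rw [isPath_copy, ← IsPath.getVert_injOn_iff]
    intro r hr r' hr' hrr'
    simp only [Set.mem_ofPred_eq, hlen] at hr hr'
    rw [hget r hr, hget r' hr'] at hrr'
    have hmod : (s + r) % L = (s + r') % L := hc.getVert_injOn'
      (by simp only [Set.mem_ofPred_eq]; have := Nat.mod_lt (s + r) (by omega : 0 < L); omega)
      (by simp only [Set.mem_ofPred_eq]; have := Nat.mod_lt (s + r') (by omega : 0 < L); omega)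
      hrr'
    have := Nat.ModEq.add_left_cancel' s hmod
    rwa [Nat.ModEq, Nat.mod_eq_of_lt (by omega : r < L), Nat.mod_eq_of_lt (by omega : r' < L)]
      at this
  · rw [support_copy] at hx
    obtain ⟨r, rfl, hr⟩ := mem_support_iff_exists_getVert.mp hx
    rw [hget r (hlen ▸ hr)]
    exact c.getVert_mem_support _

lemma Walk.IsCycle.exists_isPath_of_forall_adj {v : V} {c : H.Walk v v} (hc : c.IsCycle)
    {Q : V → Prop} (hQ : ∀ x y, H.Adj x y → Q x ∨ Q y) {t : ℕ} (ht : 2 * t < c.length) :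
    ∃ (w₁ w₂ : V) (q : H.Walk w₁ w₂), q.IsPath ∧ q.length = 2 * t ∧
      (∀ x ∈ q.support, x ∈ c.support) ∧ Q w₁ ∧ Q w₂ := by
  have hL : 0 < c.length := by omega
  obtain ⟨i, hi, hit⟩ := exists_and_add_two_mul_of_forall_or_add_one
    (Q := fun i => Q (c.getVert (i % c.length))) (fun i => hQ _ _ (c.adj_getVert_mod hL i)) t
  obtain ⟨q, hq, hlen, hsupp⟩ := hc.exists_isPath_getVert_mod (Nat.mod_lt i hL) ht
  exact ⟨_, _, q, hq, hlen, hsupp, hi, by rwa [Nat.mod_add_mod]⟩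

end Cycles

section EdgesMeeting

variable (G : SimpleGraph V) (S : Finset V)

def edgesMeeting : SimpleGraph V where
  Adj x y := G.Adj x y ∧ (x ∈ S ∨ y ∈ S)
  symm := ⟨fun _ _ h => ⟨h.1.symm, h.2.symm⟩⟩
  loopless := ⟨fun x h => G.loopless.irrefl x h.1⟩

variable {G S}

@[simp] lemma edgesMeeting_adj {x y : V} :
    (G.edgesMeeting S).Adj x y ↔ G.Adj x y ∧ (x ∈ S ∨ y ∈ S) := Iff.rfl

lemma edgesMeeting_le : G.edgesMeeting S ≤ G := fun _ _ h => h.1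

instance [DecidableEq V] [DecidableRel G.Adj] : DecidableRel (G.edgesMeeting S).Adj :=
  fun _ _ => inferInstanceAs (Decidable (_ ∧ _))

lemma sum_card_adj_edgesMeeting_add [DecidableEq V] [DecidableRel G.Adj] {W : Finset V}
    (hSW : S ⊆ W) :
    ∑ x ∈ W, #{y ∈ W | (G.edgesMeeting S).Adj x y} + ∑ x ∈ S, #{y ∈ S | G.Adj x y} =
      2 * ∑ x ∈ S, #{y ∈ W | G.Adj x y} := by
  have hS : ∀ f : V → ℕ, ∑ x ∈ S, f x = ∑ x ∈ W, if x ∈ S then f x else 0 := fun f => by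
    rw [sum_ite_mem, inter_eq_right.mpr hSW]
  simp only [card_filter, edgesMeeting_adj]
  have hT : ∑ x ∈ S, ∑ y ∈ S, (if G.Adj x y then 1 else 0) =
      ∑ x ∈ W, ∑ y ∈ W, if G.Adj x y ∧ x ∈ S ∧ y ∈ S then 1 else 0 := by
    rw [hS]
    refine sum_congr rfl fun x _ => ?_
    rw [hS, ← sum_const_zero, ← sum_ite_irrel]
    refine sum_congr rfl fun y _ => ?_
    by_cases hx : x ∈ S <;> by_cases hy : y ∈ S <;> simp [*]
  have hleft : ∑ x ∈ W, ∑ y ∈ W, (if G.Adj x y ∧ x ∈ S then 1 else 0) =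
      ∑ x ∈ S, ∑ y ∈ W, (if G.Adj x y then 1 else 0) := by
    rw [hS]
    refine sum_congr rfl fun x _ => ?_
    split_ifs <;> simp [*]
  have hright : ∑ x ∈ W, ∑ y ∈ W, (if G.Adj x y ∧ y ∈ S then 1 else 0) =
      ∑ x ∈ W, ∑ y ∈ W, (if G.Adj x y ∧ x ∈ S then 1 else 0) := by
    rw [sum_comm]
    simp only [G.adj_comm]
  have hsplit : ∑ x ∈ W, ∑ y ∈ W, (if G.Adj x y ∧ (x ∈ S ∨ y ∈ S) then 1 else 0) +
      ∑ x ∈ W, ∑ y ∈ W, (if G.Adj x y ∧ x ∈ S ∧ y ∈ S then 1 else 0) =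
      ∑ x ∈ W, ∑ y ∈ W, (if G.Adj x y ∧ x ∈ S then 1 else 0) +
      ∑ x ∈ W, ∑ y ∈ W, (if G.Adj x y ∧ y ∈ S then 1 else 0) := by
    simp only [← sum_add_distrib]
    refine sum_congr rfl fun x _ => sum_congr rfl fun y _ => ?_
    by_cases hx : x ∈ S <;> by_cases hy : y ∈ S <;> by_cases h : G.Adj x y <;> simp [*]
  rw [hT, hsplit, hright, hleft, two_mul]

end EdgesMeeting

lemma exists_isPath_of_dense [DecidableEq V] {H : SimpleGraph V} [DecidableRel H.Adj]
    {S W : Finset V} (hS : ∀ x y, H.Adj x y → x ∈ S ∨ y ∈ S) {t : ℕ}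
    (hW : 2 * (2 * t + 1) * #W < ∑ x ∈ W, #{y ∈ W | H.Adj x y}) :
    ∃ (w₁ w₂ : V) (q : H.Walk w₁ w₂), q.IsPath ∧ q.length = 2 * t ∧
      (∀ x ∈ q.support, x ∈ W) ∧ w₁ ∈ S ∧ w₂ ∈ S := by
  obtain ⟨U, hUW, hU, hdeg⟩ := exists_nonempty_subset_forall_lt_card_adj (2 * t + 1) hW
  obtain ⟨v, c, hc, hlen, hcU⟩ := exists_isCycle_lt_length (m := 2 * t + 2) (by omega) hU hdeg
  obtain ⟨w₁, w₂, q, hq, hqlen, hqc, h₁, h₂⟩ :=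
    hc.exists_isPath_of_forall_adj hS (t := t) (by omega)
  exact ⟨w₁, w₂, q, hq, hqlen, fun x hx => hUW (hcU x (hqc x hx)), h₁, h₂⟩

theorem exists_isPath_of_le_card_adj [DecidableEq V] {G : SimpleGraph V} [DecidableRel G.Adj]
    {S W : Finset V} (hSW : S ⊆ W) {t δ : ℕ} (hδ : ∀ x ∈ S, δ ≤ #{y ∈ W | G.Adj x y})
    (h : (2 * t + 1) * (#W + #S) < #S * δ) :
    ∃ (w₁ w₂ : V) (q : G.Walk w₁ w₂), q.IsPath ∧ q.length = 2 * t ∧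
      (∀ x ∈ q.support, x ∈ W) ∧ w₁ ∈ S ∧ w₂ ∈ S := by
  suffices ∃ W' ⊆ W, 2 * (2 * t + 1) * #W' < ∑ x ∈ W', #{y ∈ W' | (G.edgesMeeting S).Adj x y} by
    obtain ⟨W', hW', hdense⟩ := this
    obtain ⟨w₁, w₂, q, hq, hlen, hqW, h₁, h₂⟩ := exists_isPath_of_dense
      (fun _ _ h => (edgesMeeting_adj.mp h).2) hdense
    exact ⟨w₁, w₂, q.mapLe edgesMeeting_le, (Walk.isPath_mapLe _).mpr hq, by simpa using hlen,
      fun x hx => hW' (hqW x (by simpa [Walk.support_mapLe_eq_support] using hx)), h₁, h₂⟩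
  have hcount := sum_card_adj_edgesMeeting_add (G := G) hSW
  have hSδ : #S * δ ≤ ∑ x ∈ S, #{y ∈ W | G.Adj x y} := by
    simpa using card_nsmul_le_sum S _ δ hδ
  by_cases hT : 2 * (2 * t + 1) * #S < ∑ x ∈ S, #{y ∈ S | G.Adj x y}
  · refine ⟨S, hSW, ?_⟩
    convert hT using 2 with x hx
    exact congrArg card (filter_congr fun y _ => by simp [hx])
  · exact ⟨W, subset_rfl, by nlinarith⟩

lemma minDegree_sub_card_le_card_adj_compl [Fintype V] [DecidableEq V] {G : SimpleGraph V}
    [DecidableRel G.Adj] (J : Finset V) (x : V) : G.minDegree - #J ≤ #{y ∈ Jᶜ | G.Adj x y} :=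
  calc G.minDegree - #J ≤ #(G.neighborFinset x) - #J := by
        rw [card_neighborFinset_eq_degree]; exact Nat.sub_le_sub_right (G.minDegree_le_degree x) _
    _ ≤ #(G.neighborFinset x \ J) := le_card_sdiff _ _
    _ = #{y ∈ Jᶜ | G.Adj x y} := by congr 1; ext; simp [and_comm]

lemma Walk.IsPath.isCycle_cons_append_cons {G : SimpleGraph V} {u v w₁ w₂ : V}
    {p : G.Walk u v} {q : G.Walk w₁ w₂} (hp : p.IsPath) (hq : q.IsPath)
    (hpq : ∀ x ∈ q.support, x ∉ p.support) (hpl : 0 < p.length)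
    (h₁ : G.Adj u w₁) (h₂ : G.Adj w₂ v) :
    (Walk.cons h₁ (q.append (Walk.cons h₂ p.reverse))).IsCycle := by
  rw [← Walk.cons_append]
  refine (hq.cons fun hu => hpq u hu p.start_mem_support).isCycle_append
    (hp.reverse.cons (by simpa using hpq w₂ q.end_mem_support)) ?_ (Or.inr (by simpa))
  simpa using List.disjoint_left.mpr hpq

end SimpleGraph

lemma two_mul_add_one_mul_add_lt_mul_sub {k l t a b n δ : ℕ} {ε : ℝ} (hk : 2 ≤ k)
    (hε : 0 < ε) (hn : (4 * k : ℝ) / ε ≤ n) (hδ : ((1 : ℝ) / (2 * k - 1) + ε) * n ≤ δ)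
    (ht : l + 2 * t + 2 = 2 * k - 1) (ha : 5 * k ^ 2 ≤ a + (l + 1)) (hb : b ≤ n) :
    (2 * t + 1) * (b + a) < a * (δ - (l + 1)) := by
  have hk' : (2 : ℝ) ≤ k := by exact_mod_cast hk
  have hD : (0 : ℝ) < 2 * k - 1 := by linarith
  rw [div_le_iff₀ hε] at hn
  set y := (1 : ℝ) / (2 * k - 1) * n with hy
  have hny : (n : ℝ) = y * (2 * k - 1) := by rw [hy]; field_simp
  have hy0 : 0 ≤ y := by positivity
  have htR : (l : ℝ) + 2 * t + 3 = 2 * k := by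
    have : l + 2 * t + 3 = 2 * k := by omega
    exact_mod_cast this
  have haR : 5 * (k : ℝ) ^ 2 ≤ a + (l + 1) := by exact_mod_cast ha
  have hbR : (b : ℝ) ≤ n := by exact_mod_cast hb
  have hlδ : l + 1 ≤ δ := by
    have : (l : ℝ) + 1 ≤ δ := by nlinarith
    exact_mod_cast this
  have hgoal : ((2 * t + 1) * (b + a) : ℝ) < a * (δ - (l + 1)) := by
    nlinarith [mul_nonneg hy0 (sub_nonneg.mpr hbR)]
  rw [← Nat.cast_lt (α := ℝ)]
  push_cast [Nat.cast_sub hlδ]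
  linarith

open SimpleGraph in
/-- Let `k ≥ 2`, `ε > 0`, and let `G` be a `C_{2k-1}`-free graph on `n ≥ 4k/ε` vertices with
minimum degree at least `(1/(2k-1) + ε)n`.  If two vertices `u`, `v` are joined by a path of
odd length at most `2k-3`, then they have fewer than `5k²` common neighbours. -/
theorem common_neighbours_lt_of_odd_path {V : Type} [Fintype V] [DecidableEq V]
    (G : SimpleGraph V) [DecidableRel G.Adj] (k : ℕ) (hk : 2 ≤ k) (ε : ℝ) (hε : 0 < ε)
    (hn : (4 * k : ℝ) / ε ≤ Fintype.card V)
    (hfree : ¬ ∃ (v : V) (w : G.Walk v v), w.IsCycle ∧ w.length = 2*k-1)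
    (hdeg : ∀ v : V, ((1 : ℝ) / (2*k - 1) + ε) * Fintype.card V ≤ G.degree v)
    (u v : V) (p : G.Walk u v) (hp : p.IsPath) (hodd : Odd p.length)
    (hlen : p.length ≤ 2*k-3) :
    (G.neighborFinset u ∩ G.neighborFinset v).card < 5 * k^2 := by
  by_contra! hA
  obtain ⟨t, ht⟩ : ∃ t, p.length + 2 * t + 2 = 2 * k - 1 :=
    ⟨(2 * k - 3 - p.length) / 2, by obtain ⟨c, hc⟩ := hodd; omega⟩
  set J := p.support.toFinset
  set A := (G.neighborFinset u ∩ G.neighborFinset v) \ J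
  have hJ : #J = p.length + 1 := by
    rw [List.toFinset_card_of_nodup hp.support_nodup, Walk.length_support]
  have hAcard : 5 * k ^ 2 ≤ #A + (p.length + 1) := by
    have : #(G.neighborFinset u ∩ G.neighborFinset v) - #J ≤ #A := le_card_sdiff _ _
    omega
  have : Nonempty V := ⟨u⟩
  obtain ⟨x, hx⟩ := G.exists_minimal_degree_vertex
  have hδ : ∀ y ∈ A, G.minDegree - (p.length + 1) ≤ #{z ∈ Jᶜ | G.Adj y z} :=
    fun y _ => hJ ▸ minDegree_sub_card_le_card_adj_compl J y
  obtain ⟨w₁, w₂, q, hq, hqlen, hqJ, hw₁, hw₂⟩ := exists_isPath_of_le_card_adj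
    (fun y hy => mem_compl.mpr (mem_sdiff.mp hy).2 : A ⊆ Jᶜ) hδ
    (two_mul_add_one_mul_add_lt_mul_sub hk hε hn (hx ▸ hdeg x) ht hAcard (card_le_univ _))
  have hadj : ∀ w ∈ A, G.Adj u w ∧ G.Adj w v := fun w hw => by
    simp only [A, mem_sdiff, mem_inter, mem_neighborFinset] at hw
    exact ⟨hw.1.1, hw.1.2.symm⟩
  refine hfree ⟨u, _, hp.isCycle_cons_append_cons hq (fun x hx => by simpa [J] using hqJ x hx)
    (by omega) (hadj w₁ hw₁).1 (hadj w₂ hw₂).2, by simp; omega⟩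
end

section
/- For every integer k ≥ 2 there exist arbitrarily large graphs G that contain no odd cycle of length at most 2k-1, have minimum degree δ(G) ≥ (|V(G)| - 2)/(2k-1), and have the property that every graph H admitting a homomorphism from G with |V(H)| < |V(G)| contains an odd cycle of length at most 2k-1. Consequently δ_hom(𝒞_{2k-1}) ≥ 1/(2k-1). -/
/-- `G` contains no cycle whose length lies in `L`. -/
def CycleFree {V : Type} (G : SimpleGraph V) (L : Set ℕ) : Prop :=
  ∀ ⦃v : V⦄ (w : G.Walk v v), w.IsCycle → w.length ∉ L

/-- The homomorphism threshold of the family of cycles with lengths in `L`: the infimum over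
all `α ∈ [0,1]` such that there is a graph `H` containing no cycle with length in `L` into
which every graph `G` with no cycle of length in `L` and minimum degree at least `α|V(G)|`
admits a graph homomorphism. -/
noncomputable def homThresholdCycles (L : Set ℕ) : ℝ :=
  sInf {α : ℝ | 0 ≤ α ∧ α ≤ 1 ∧ ∃ (m : ℕ) (H : SimpleGraph (Fin m)), CycleFree H L ∧
    ∀ (n : ℕ) (G : SimpleGraph (Fin n)), CycleFree G L →
      (∀ v, α * n ≤ (G.neighborSet v).ncard) → Nonempty (G →g H)}

/-!
The Andrásfai graph `A_{j+1,m+1}` is the Cayley graph of `ℤ/n`, `n = (2j+1)m+2`, with jumps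
`jm+1, …, (j+1)m+1`; it is `(m+1)`-regular. The jumps along a closed walk of odd length
`L = 2i+1 ≤ 2j+1` sum to a multiple `qn` of `n` with `L(jm+1) ≤ qn ≤ L((j+1)m+1)`, which
forces `i < q < i+1`; so the graph has no odd cycle of length at most `2j+1`. On the other hand
`(2j+1)(jm+1) = jn+1`, so sums of `2j+1` jumps hit every nonzero residue: any two distinct
vertices are joined by a walk of length exactly `2j+1`. A homomorphism into a graph with fewer
vertices identifies the ends of such a walk, and the resulting odd closed walk contains an odd
cycle of length at most `2j+1`. For `α < 1/(2j+1)` these graphs have minimum degree at least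
`αn`, so no fixed `𝒞_{2j+1}`-free graph can receive all of them.
-/

open scoped Pointwise Fin.NatCast

namespace SimpleGraph.Walk

variable {V : Type*} {G : SimpleGraph V}

theorem exists_eq_append_append_of_not_isPath [DecidableEq V] {u v : V} {p : G.Walk u v}
    (hp : ¬p.IsPath) :
    ∃ (z : V) (q : G.Walk u z) (c : G.Walk z z) (r : G.Walk z v),
      ¬c.Nil ∧ p = q.append (c.append r) := by
  induction p with
  | nil => exact absurd IsPath.nil hp
  | @cons u w v h p ih =>
    by_cases hpath : p.IsPath
    · have hu : u ∈ p.support := by simpa [cons_isPath_iff, hpath] using hp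
      refine ⟨u, nil, cons h (p.takeUntil u hu), p.dropUntil u hu, not_nil_cons, ?_⟩
      conv_lhs => rw [← p.take_spec hu]
      rfl
    · obtain ⟨z, q, c, r, hc, rfl⟩ := ih hpath
      exact ⟨z, cons h q, c, r, hc, rfl⟩

theorem exists_isCycle_odd_length_le {u : V} (c : G.Walk u u) (hc : Odd c.length) :
    ∃ (v : V) (c' : G.Walk v v), c'.IsCycle ∧ Odd c'.length ∧ c'.length ≤ c.length := by
  classical
  induction hL : c.length using Nat.strong_induction_on generalizing u with
  | _ L ih =>
  subst hL
  cases c with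
  | nil => simp at hc
  | @cons _ y _ h p =>
    by_cases hp : p.IsPath
    · refine ⟨u, cons h p, isCycle_iff_isPath_tail_and_le_length.mpr ⟨?_, ?_⟩, hc, le_rfl⟩
      · simpa [tail_cons] using hp
      · have hp0 : p.length ≠ 0 := fun h0 => h.ne (eq_of_length_eq_zero h0).symm
        rw [length_cons] at hc ⊢
        rcases hc with ⟨i, hi⟩
        omega
    · obtain ⟨z, q, c, r, hc_nil, rfl⟩ := exists_eq_append_append_of_not_isPath hp
      have hc_pos : 0 < c.length := not_nil_iff_lt_length.mp hc_nil
      set outer := cons h (q.append r)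
      have hlen : (cons h (q.append (c.append r))).length = c.length + outer.length := by
        simp only [outer, length_cons, length_append]; omega
      have hc_lt : c.length < c.length + outer.length := by simp [outer]
      rw [hlen] at hc ih
      rcases Nat.even_or_odd c.length with heven | hodd
      · obtain ⟨v, c', hc', hodd', hle⟩ :=
          ih _ (by omega) outer (Nat.odd_add'.mp hc |>.mpr heven) rfl
        exact ⟨v, c', hc', hodd', by omega⟩
      · obtain ⟨v, c', hc', hodd', hle⟩ := ih _ hc_lt c hodd rfl
        exact ⟨v, c', hc', hodd', by omega⟩

theorem natCast_sum_darts_val_sub {n : ℕ} [NeZero n] {G : SimpleGraph (Fin n)}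
    {u v : Fin n} (w : G.Walk u v) :
    (Nat.cast (w.darts.map fun e => (e.snd - e.fst).val).sum : Fin n) = v - u := by
  induction w with
  | nil => simp
  | cons h p ih =>
    rw [darts_cons, List.map_cons, List.sum_cons, Nat.cast_add, ih, Fin.cast_val_eq_self]
    abel

end SimpleGraph.Walk

namespace SimpleGraph

theorem exists_odd_cycle_of_hom_of_card_lt {V W : Type*} [Fintype V] [Fintype W]
    {G : SimpleGraph V} {H : SimpleGraph W} {ℓ : ℕ} (hℓ : Odd ℓ)
    (hG : ∀ u v, u ≠ v → ∃ w : G.Walk u v, w.length = ℓ) (φ : G →g H)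
    (hcard : Fintype.card W < Fintype.card V) :
    ∃ (x : W) (c : H.Walk x x), c.IsCycle ∧ Odd c.length ∧ c.length ≤ ℓ := by
  obtain ⟨u, v, huv, hφ⟩ := Fintype.exists_ne_map_eq_of_card_lt φ hcard
  obtain ⟨w, hw⟩ := hG u v huv
  have hlen : ((w.map φ).copy rfl hφ.symm).length = ℓ := by simpa using hw
  obtain ⟨x, c, hc, hodd, hle⟩ :=
    ((w.map φ).copy rfl hφ.symm).exists_isCycle_odd_length_le (hlen ▸ hℓ)
  exact ⟨x, c, hc, hodd, hlen ▸ hle⟩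

theorem exists_walk_circulantGraph_of_mem_nsmul {A : Type*} [AddCommGroup A] {s : Set A}
    (hs : (0 : A) ∉ s) {p : ℕ} {x : A} (hx : x ∈ p • s) (u : A) :
    ∃ w : (circulantGraph s).Walk u (u + x), w.length = p := by
  induction p generalizing x u with
  | zero =>
    rw [zero_nsmul, Set.mem_zero] at hx
    subst hx
    exact ⟨Walk.nil.copy rfl (add_zero u).symm, by simp⟩
  | succ p ih =>
    rw [succ_nsmul', Set.mem_add] at hx
    obtain ⟨y, hy, z, hz, rfl⟩ := hx
    have hadj : (circulantGraph s).Adj u (u + y) := by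
      have hy0 : y ≠ 0 := fun h => hs (h ▸ hy)
      exact ⟨by simpa using hy0, Or.inr (by simpa using hy)⟩
    obtain ⟨w, hw⟩ := ih hz (u + y)
    exact ⟨(Walk.cons hadj w).copy rfl (add_assoc u y z), by simp [hw]⟩

end SimpleGraph

open SimpleGraph

theorem Nat.Icc_mul_subset_nsmul_Icc (p a b : ℕ) :
    Set.Icc (p * a) (p * b) ⊆ p • Set.Icc a b := by
  induction p with
  | zero => simp
  | succ p ih =>
    rintro x ⟨hlo, hhi⟩
    have hab : a ≤ b := Nat.le_of_mul_le_mul_left (hlo.trans hhi) p.succ_pos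
    have hpab : p * a ≤ p * b := Nat.mul_le_mul_left p hab
    rw [add_one_mul] at hlo hhi
    rw [succ_nsmul', Set.mem_add]
    refine ⟨min b (x - p * a), ⟨by omega, by omega⟩, x - min b (x - p * a),
      ih ⟨by omega, by omega⟩, by omega⟩

theorem mul_notMem_Icc_of_odd {j m L : ℕ} (hL : Odd L) (hLj : L ≤ 2 * j + 1) (q : ℕ) :
    q * ((2 * j + 1) * m + 2) ∉ Set.Icc (L * (j * m + 1)) (L * ((j + 1) * m + 1)) := by
  rintro ⟨hlo, hhi⟩
  obtain ⟨i, rfl⟩ := hL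
  set n := (2 * j + 1) * m + 2 with hn
  have e1 : (j * m + 1) * (2 * j + 1) = j * n + 1 := by rw [hn]; ring
  have e2 : ((j + 1) * m + 1) * (2 * j + 1) + 1 = (j + 1) * n := by rw [hn]; ring
  -- Multiplied by `2j+1`, the window shrinks to `(2i+1)j < q(2j+1) < (2i+1)(j+1)`, an open interval
  -- inside `(i(2j+1), (i+1)(2j+1))`.
  have h1 : (2 * i + 1) * j < q * (2 * j + 1) := by
    have := Nat.mul_le_mul_right (2 * j + 1) hlo
    rw [mul_assoc, e1] at this
    exact Nat.lt_of_mul_lt_mul_right (a := n) (by nlinarith)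
  have h2 : q * (2 * j + 1) < (2 * i + 1) * (j + 1) := by
    have := Nat.mul_le_mul_right (2 * j + 1) hhi
    rw [mul_assoc (2 * i + 1)] at this
    exact Nat.lt_of_mul_lt_mul_right (a := n) (by nlinarith)
  have : i < q := by nlinarith
  have : q < i + 1 := by nlinarith
  omega

/-- The Andrásfai graph `A_{k,r}` of the paper, with `k = j + 1` and `r = m + 1`. -/
def andrasfaiGraph (j m : ℕ) : SimpleGraph (Fin ((2 * j + 1) * m + 2)) :=
  circulantGraph {x | j * m + 1 ≤ x.val ∧ x.val ≤ (j + 1) * m + 1}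

section Andrasfai

variable {j m : ℕ}

theorem andrasfaiGraph_adj {u v : Fin ((2 * j + 1) * m + 2)} :
    (andrasfaiGraph j m).Adj u v ↔
      j * m + 1 ≤ (v - u).val ∧ (v - u).val ≤ (j + 1) * m + 1 := by
  have hn : (2 * j + 1) * m + 2 = (j * m + 1) + ((j + 1) * m + 1) := by ring
  simp only [andrasfaiGraph, circulantGraph_adj, Set.mem_ofPred_eq]
  constructor
  · rintro ⟨-, h | h⟩
    · have h0 : u - v ≠ 0 := fun h0 => by simp [h0] at h
      rw [← neg_sub, Fin.val_neg, if_neg h0]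
      omega
    · exact h
  · refine fun h => ⟨fun huv => ?_, Or.inr h⟩
    simp [huv] at h

theorem ncard_neighborSet_andrasfaiGraph (v : Fin ((2 * j + 1) * m + 2)) :
    ((andrasfaiGraph j m).neighborSet v).ncard = m + 1 := by
  have hn : (2 * j + 1) * m + 2 = (j * m + 1) + ((j + 1) * m + 1) := by ring
  have hnbr : (andrasfaiGraph j m).neighborSet v
      = (· - v) ⁻¹' (Fin.val ⁻¹' Set.Icc (j * m + 1) ((j + 1) * m + 1)) := by
    ext u
    simp [andrasfaiGraph_adj]
  rw [hnbr, Set.ncard_preimage_of_injective_subset_range sub_left_injective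
      fun x _ => ⟨x + v, add_sub_cancel_right x v⟩,
    Set.ncard_preimage_of_injective_subset_range Fin.val_injective
      (fun x hx => ⟨⟨x, by simp at hx; omega⟩, rfl⟩),
    ← Finset.coe_Icc, Set.ncard_coe_finset, Nat.card_Icc]
  ring_nf; omega

theorem lt_length_of_odd_andrasfaiGraph {u : Fin ((2 * j + 1) * m + 2)}
    (c : (andrasfaiGraph j m).Walk u u) (hc : Odd c.length) : 2 * j + 1 < c.length := by
  by_contra! hle
  set T := (c.darts.map fun e => (e.snd - e.fst).val).sum
  obtain ⟨q, hq⟩ : (2 * j + 1) * m + 2 ∣ T := by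
    rw [← Fin.natCast_eq_zero, c.natCast_sum_darts_val_sub, sub_self]
  have hjump : ∀ t ∈ c.darts.map fun e => (e.snd - e.fst).val,
      j * m + 1 ≤ t ∧ t ≤ (j + 1) * m + 1 := by
    simp only [List.mem_map]
    rintro _ ⟨e, -, rfl⟩
    exact andrasfaiGraph_adj.mp e.adj
  refine mul_notMem_Icc_of_odd (m := m) hc hle q ⟨?_, ?_⟩
  · simpa [mul_comm q, ← hq, T] using List.card_nsmul_le_sum _ _ fun t ht => (hjump t ht).1
  · simpa [mul_comm q, ← hq, T] using List.sum_le_card_nsmul _ _ fun t ht => (hjump t ht).2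

theorem cycleFree_andrasfaiGraph :
    CycleFree (andrasfaiGraph j m) {ℓ | Odd ℓ ∧ ℓ ≤ 2 * j + 1} :=
  fun _ c _ hc => (lt_length_of_odd_andrasfaiGraph c hc.1).not_ge hc.2

theorem exists_walk_length_andrasfaiGraph {u v : Fin ((2 * j + 1) * m + 2)} (huv : u ≠ v) :
    ∃ w : (andrasfaiGraph j m).Walk u v, w.length = 2 * j + 1 := by
  set r := (v - u).val
  have hr0 : r ≠ 0 := by simpa [r, Fin.val_eq_zero_iff, sub_eq_zero] using huv.symm
  have hrn : r < (2 * j + 1) * m + 2 := (v - u).isLt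
  have hr1 : r - 1 ≤ (2 * j + 1) * m := by omega
  have hx : (2 * j + 1) * (j * m + 1) + (r - 1) ∈
      (2 * j + 1) • Set.Icc (j * m + 1) ((j + 1) * m + 1) :=
    Nat.Icc_mul_subset_nsmul_Icc _ _ _ ⟨by omega, by nlinarith⟩
  have hcast :
      (((2 * j + 1) * (j * m + 1) + (r - 1) : ℕ) : Fin ((2 * j + 1) * m + 2)) = v - u := by
    have : (2 * j + 1) * (j * m + 1) + (r - 1) = j * ((2 * j + 1) * m + 2) + r := by
      ring_nf; omega
    rw [this, Fin.ext_iff, Fin.val_natCast, Nat.mul_add_mod_of_lt hrn]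
  have hjumps : Nat.cast '' Set.Icc (j * m + 1) ((j + 1) * m + 1) ⊆
      {x : Fin ((2 * j + 1) * m + 2) | j * m + 1 ≤ x.val ∧ x.val ≤ (j + 1) * m + 1} := by
    rintro _ ⟨t, ht, rfl⟩
    have htn : t < (2 * j + 1) * m + 2 := by simp only [Set.mem_Icc] at ht; nlinarith
    simpa [Fin.val_natCast, Nat.mod_eq_of_lt htn] using ht
  have hmem := Set.nsmul_subset_nsmul_left hjumps <|
    Set.image_nsmul (Nat.castAddMonoidHom (Fin ((2 * j + 1) * m + 2))) _ _ ▸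
      Set.mem_image_of_mem _ hx
  rw [Nat.coe_castAddMonoidHom, hcast] at hmem
  obtain ⟨w, hw⟩ := exists_walk_circulantGraph_of_mem_nsmul (by simp) hmem u
  exact ⟨w.copy rfl (add_sub_cancel u v), (Walk.length_copy _ _ _).trans hw⟩

end Andrasfai

def HasUniversalHomTarget (L : Set ℕ) (α : ℝ) : Prop :=
  ∃ (m : ℕ) (H : SimpleGraph (Fin m)), CycleFree H L ∧
    ∀ (n : ℕ) (G : SimpleGraph (Fin n)), CycleFree G L →
      (∀ v, α * n ≤ (G.neighborSet v).ncard) → Nonempty (G →g H)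

theorem ncard_neighborSet_lt {V : Type*} [Finite V] (G : SimpleGraph V) (v : V) :
    (G.neighborSet v).ncard < Nat.card V := by
  rw [← Set.ncard_univ]
  exact Set.ncard_lt_ncard (Set.ssubset_univ_iff.mpr fun h => G.irrefl (h ▸ Set.mem_univ v))

theorem hasUniversalHomTarget_one (L : Set ℕ) : HasUniversalHomTarget L 1 := by
  refine ⟨0, ⊥, fun v => v.elim0, fun n G _ hdeg => ?_⟩
  cases n with
  | zero => exact ⟨⟨fun v => v.elim0, fun {v} => v.elim0⟩⟩
  | succ n =>
    have hle : n + 1 ≤ (G.neighborSet 0).ncard := by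
      exact_mod_cast (one_mul _).symm.trans_le (hdeg 0)
    exact absurd hle (not_le.mpr (by simpa using ncard_neighborSet_lt G 0))

theorem le_homThresholdCycles {L : Set ℕ} {β : ℝ}
    (h : ∀ α, HasUniversalHomTarget L α → β ≤ α) : β ≤ homThresholdCycles L :=
  le_csInf ⟨1, zero_le_one, le_rfl, hasUniversalHomTarget_one L⟩ fun _ hα => h _ hα.2.2

theorem le_of_hasUniversalHomTarget_oddCycles {j : ℕ} (hj : 1 ≤ j) {α : ℝ}
    (hα : HasUniversalHomTarget {ℓ | Odd ℓ ∧ ℓ ≤ 2 * j + 1} α) :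
    1 / (2 * j + 1) ≤ α := by
  obtain ⟨m, H, hH, hmap⟩ := hα
  by_contra! hlt
  have hj' : (1 : ℝ) ≤ j := by exact_mod_cast hj
  have hα : α * (2 * j + 1) < 1 := by rwa [lt_div_iff₀ (by positivity)] at hlt
  -- As `α < 1/3`, already the Andrásfai graph with `m = |V(H)|` has `δ ≥ α n`.
  have hdeg : ∀ v,
      α * (((2 * j + 1) * m + 2 : ℕ) : ℝ) ≤ ((andrasfaiGraph j m).neighborSet v).ncard := by
    intro v
    rw [ncard_neighborSet_andrasfaiGraph]
    push_cast
    nlinarith [mul_nonneg (sub_nonneg.mpr hα.le) (Nat.cast_nonneg (α := ℝ) m)]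
  obtain ⟨φ⟩ := hmap _ _ cycleFree_andrasfaiGraph hdeg
  obtain ⟨x, c, hc, hodd, hle⟩ := exists_odd_cycle_of_hom_of_card_lt (odd_two_mul_add_one j)
    (fun _ _ => exists_walk_length_andrasfaiGraph) φ (by simp; nlinarith)
  exact hH c hc ⟨hodd, hle⟩

/-- For every `k ≥ 2` there are arbitrarily large graphs `G` without odd cycles of length at
most `2k-1`, with minimum degree at least `(|V(G)|-2)/(2k-1)`, such that every homomorphic
image `H` of `G` with fewer vertices contains an odd cycle of length at most `2k-1`.
Consequently `δ_hom(𝒞_{2k-1}) ≥ 1/(2k-1)`. -/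
theorem homThreshold_odd_cycles_ge (k : ℕ) (hk : 2 ≤ k) :
    (∀ N : ℕ, ∃ n : ℕ, N ≤ n ∧ ∃ G : SimpleGraph (Fin n),
      CycleFree G {ℓ : ℕ | Odd ℓ ∧ ℓ ≤ 2*k-1} ∧
      (∀ v, ((n : ℝ) - 2) / (2*k - 1) ≤ (G.neighborSet v).ncard) ∧
      (∀ (W : Type) [Fintype W], ∀ H : SimpleGraph W, Nonempty (G →g H) →
        Fintype.card W < n →
          ∃ (x : W) (c : H.Walk x x), c.IsCycle ∧ Odd c.length ∧ c.length ≤ 2*k-1)) ∧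
    (1 : ℝ) / (2*k - 1) ≤ homThresholdCycles {ℓ : ℕ | Odd ℓ ∧ ℓ ≤ 2*k-1} := by
  obtain ⟨j, rfl⟩ : ∃ j, k = j + 1 := ⟨k - 1, by omega⟩
  rw [show 2 * (j + 1) - 1 = 2 * j + 1 by omega,
    show 2 * ((j + 1 : ℕ) : ℝ) - 1 = 2 * j + 1 by push_cast; ring]
  refine ⟨fun N => ⟨(2 * j + 1) * N + 2, by nlinarith, andrasfaiGraph j N,
    cycleFree_andrasfaiGraph, fun v => ?_, fun W _ H ⟨φ⟩ hcard => ?_⟩,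
    le_homThresholdCycles fun α => le_of_hasUniversalHomTarget_oddCycles (by omega)⟩
  · rw [ncard_neighborSet_andrasfaiGraph, div_le_iff₀ (by positivity)]
    push_cast
    nlinarith
  · exact exists_odd_cycle_of_hom_of_card_lt (odd_two_mul_add_one j)
      (fun _ _ => exists_walk_length_andrasfaiGraph) φ (by simpa using hcard)
end

section
/- For all integers k ≥ 2 and r ≥ 1, no (2k+1)-tetrahedron T ∈ 𝒯_k admits a graph homomorphism into the Andrásfai graph A_{k,r}. -/
/-- `T` is a `(2k+1)`-tetrahedron (a member of `𝒯_k`): it consists of a cycle `C` with three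
branch vertices `a, b, c`, a center vertex `z`, and three internally vertex-disjoint spokes of
length at least `2` joining the branch vertices to `z`, such that every cycle containing `z`
and exactly two of the branch vertices has length `2k+1`. -/
structure TetraStructure (k : ℕ) {V : Type} (T : SimpleGraph V) where
  a : V
  b : V
  c : V
  z : V
  C : T.Walk a a
  Pa : T.Walk a z
  Pb : T.Walk b z
  Pc : T.Walk c z
  hC : C.IsCycle
  hb : b ∈ C.support
  hc : c ∈ C.support
  hab : a ≠ b
  hac : a ≠ c
  hbc : b ≠ c
  hz : z ∉ C.support
  hPa : Pa.IsPath
  hPb : Pb.IsPath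
  hPc : Pc.IsPath
  hPa2 : 2 ≤ Pa.length
  hPb2 : 2 ≤ Pb.length
  hPc2 : 2 ≤ Pc.length
  hPaPb : ∀ x, x ∈ Pa.support → x ∈ Pb.support → x = z
  hPaPc : ∀ x, x ∈ Pa.support → x ∈ Pc.support → x = z
  hPbPc : ∀ x, x ∈ Pb.support → x ∈ Pc.support → x = z
  hPaC : ∀ x, x ∈ Pa.support → x ∈ C.support → x = a
  hPbC : ∀ x, x ∈ Pb.support → x ∈ C.support → x = b
  hPcC : ∀ x, x ∈ Pc.support → x ∈ C.support → x = c
  hV : ∀ x : V, x ∈ C.support ∨ x ∈ Pa.support ∨ x ∈ Pb.support ∨ x ∈ Pc.support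
  hE : ∀ e : Sym2 V, e ∈ T.edgeSet ↔
    (e ∈ C.edges ∨ e ∈ Pa.edges ∨ e ∈ Pb.edges ∨ e ∈ Pc.edges)
  hlen : ∀ (v : V) (w : T.Walk v v), w.IsCycle → z ∈ w.support →
    ((a ∈ w.support ∧ b ∈ w.support ∧ c ∉ w.support) ∨
     (a ∈ w.support ∧ c ∈ w.support ∧ b ∉ w.support) ∨
     (b ∈ w.support ∧ c ∈ w.support ∧ a ∉ w.support)) → w.length = 2*k+1

open SimpleGraph Set

/-!
View `A_{k,r}` as a circular graph on `ℤ/n`: every edge of the image of a homomorphism moves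
forward by a residue strictly between `(k-1)n/(2k-1)` and `kn/(2k-1)`. Summing these residues
along a closed walk gives a multiple `mn` of `n`, and for a closed walk of length `2k+1` the
bounds force `m ∈ {k, k+1}`. So two of the three cycles of the tetrahedron through the centre
that contain two branch vertices have the same `m`. Gluing them along their common spoke, of
length `q ≥ 2`, and deleting the spoke gives a closed walk of length `2(2k+1) - 2q` with sum
`(2m - q)n`, which violates the same bounds.
-/

namespace SimpleGraph.Walk

variable {V : Type*} {G : SimpleGraph V}

lemma IsPath.start_notMem_tail_support {u v : V} {p : G.Walk u v} (hp : p.IsPath) :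
    u ∉ p.support.tail := by
  have := hp.support_nodup
  rw [← cons_tail_support] at this
  exact (List.nodup_cons.mp this).1

lemma IsPath.append {u v w : V} {p : G.Walk u v} {q : G.Walk v w} (hp : p.IsPath) (hq : q.IsPath)
    (h : ∀ x ∈ p.support, x ∈ q.support → x = v) : (p.append q).IsPath := by
  rw [isPath_def, support_append]
  exact hp.support_nodup.append hq.support_nodup.tail fun x hxp hxq ↦
    hq.start_notMem_tail_support (h x hxp (List.mem_of_mem_tail hxq) ▸ hxq)

lemma IsPath.isCycle_append_of_inter {u v : V} {p : G.Walk u v} {q : G.Walk v u} (hp : p.IsPath)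
    (hq : q.IsPath) (h : ∀ x ∈ p.support, x ∈ q.support → x = u ∨ x = v) (hq2 : 2 ≤ q.length) :
    (p.append q).IsCycle := by
  refine hp.isCycle_append hq (fun x hxp hxq ↦ ?_) (Or.inr hq2)
  rcases h x (List.mem_of_mem_tail hxp) (List.mem_of_mem_tail hxq) with rfl | rfl
  · exact hp.start_notMem_tail_support hxp
  · exact hq.start_notMem_tail_support hxq

lemma IsCycle.exists_isPath_notMem {u x y w : V} {C : G.Walk u u} (hC : C.IsCycle)
    (hx : x ∈ C.support) (hy : y ∈ C.support) (hxy : x ≠ y) (hxw : x ≠ w) (hyw : y ≠ w) :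
    ∃ A : G.Walk x y, A.IsPath ∧ A.support ⊆ C.support ∧ w ∉ A.support := by
  classical
  set D := C.rotate x hx
  have hD : D.IsCycle := hC.rotate hx
  have hyD : y ∈ D.support := (mem_support_rotate_iff C x hx).mpr hy
  set p := D.takeUntil y hyD
  set q := D.dropUntil y hyD
  have hDpq : D = p.append q := (take_spec D hyD).symm
  have hsub : ∀ a, a ∈ p.support ∨ a ∈ q.support → a ∈ C.support := by
    intro a ha
    rw [← mem_support_rotate_iff C x hx]
    change a ∈ D.support
    rwa [hDpq, mem_support_append_iff]
  have hpq : p.support.tail.Disjoint q.support.tail := by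
    have := hD.support_nodup
    rw [hDpq, tail_support_append] at this
    exact List.disjoint_of_nodup_append this
  have hq : q.IsPath := (hDpq ▸ hD).isPath_of_append_right (not_nil_of_ne hxy)
  by_cases hwp : w ∈ p.support
  · refine ⟨q.reverse, hq.reverse, fun a ha ↦ hsub a (Or.inr (by simpa using ha)), ?_⟩
    rw [support_reverse, List.mem_reverse]
    intro hwq
    rw [← cons_tail_support] at hwp hwq
    exact hpq ((List.mem_cons.mp hwp).resolve_left hxw.symm)
      ((List.mem_cons.mp hwq).resolve_left hyw.symm)
  · exact ⟨p, hD.isPath_takeUntil hyD, fun a ha ↦ hsub a (Or.inl ha), hwp⟩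

lemma IsCycle.exists_isCycle_append_spokes {u x y w z : V} {C : G.Walk u u} (hC : C.IsCycle)
    (hx : x ∈ C.support) (hy : y ∈ C.support) (hxy : x ≠ y) (hxw : x ≠ w) (hyw : y ≠ w)
    {Px : G.Walk x z} {Py : G.Walk y z} (hPx : Px.IsPath) (hPy : Py.IsPath)
    (hPy2 : 2 ≤ Py.length) (hPxPy : ∀ v, v ∈ Px.support → v ∈ Py.support → v = z)
    (hPxC : ∀ v, v ∈ Px.support → v ∈ C.support → v = x)
    (hPyC : ∀ v, v ∈ Py.support → v ∈ C.support → v = y)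
    (hwPx : w ∉ Px.support) (hwPy : w ∉ Py.support) :
    ∃ A : G.Walk x y, ((Px.reverse.append A).append Py).IsCycle ∧
      w ∉ ((Px.reverse.append A).append Py).support := by
  obtain ⟨A, hA, hAC, hwA⟩ := hC.exists_isPath_notMem hx hy hxy hxw hyw
  have hPxA : (Px.reverse.append A).IsPath :=
    hPx.reverse.append hA fun v hv hvA ↦ hPxC v (by simpa using hv) (hAC hvA)
  refine ⟨A, hPxA.isCycle_append_of_inter hPy (fun v hv hvPy ↦ ?_) hPy2, ?_⟩
  · rw [mem_support_append_iff, support_reverse, List.mem_reverse] at hv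
    exact hv.imp (hPxPy v · hvPy) (hPyC v hvPy <| hAC ·)
  · simp [mem_support_append_iff, hwPx, hwA, hwPy]

section Winding

variable {n : ℕ} (f : V → Fin n)

/-- The sum of the forward steps `f v - f u mod n`, each taken in `[0, n)`, along `W`. -/
def winding {u v : V} (W : G.Walk u v) : ℤ :=
  (W.darts.map fun d ↦ ((f d.snd : ℕ) - (f d.fst : ℕ) : ℤ) % n).sum

@[simp] lemma winding_nil {u : V} : (nil : G.Walk u u).winding f = 0 := rfl

@[simp] lemma winding_cons {u v w : V} (h : G.Adj u v) (W : G.Walk v w) :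
    (cons h W).winding f = ((f v : ℕ) - (f u : ℕ) : ℤ) % n + W.winding f := by
  simp [winding]

@[simp] lemma winding_append {u v w : V} (W : G.Walk u v) (W' : G.Walk v w) :
    (W.append W').winding f = W.winding f + W'.winding f := by
  simp [winding]

lemma winding_modEq {u v : V} (W : G.Walk u v) :
    W.winding f ≡ (f v : ℕ) - (f u : ℕ) [ZMOD n] := by
  induction W with
  | nil => simp [Int.ModEq]
  | cons h W ih =>
    rw [winding_cons]
    convert (Int.mod_modEq _ n).add ih using 1
    ring

lemma winding_add_winding_reverse (hf : ∀ u v, G.Adj u v → f u ≠ f v) {u v : V}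
    (W : G.Walk u v) : W.winding f + W.reverse.winding f = W.length * n := by
  induction W with
  | nil => simp
  | @cons u v w h W ih =>
    have hn : (0 : ℤ) < n := by have := (f u).pos; omega
    have hndvd : ¬ (n : ℤ) ∣ (f v : ℕ) - (f u : ℕ) := fun hdvd ↦ hf u v h <| Fin.ext <| by
      have := Int.eq_zero_of_dvd_of_natAbs_lt_natAbs hdvd (by omega)
      omega
    have hswap : ((f u : ℕ) - (f v : ℕ) : ℤ) % n = n - ((f v : ℕ) - (f u : ℕ) : ℤ) % n := by
      rw [← neg_sub, Int.neg_emod, if_neg hndvd, Int.natCast_natAbs, abs_of_pos hn]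
    rw [reverse_cons, winding_append, winding_cons, winding_cons, winding_nil, length_cons, hswap]
    push_cast
    linarith

lemma mul_winding_mem_Icc {c lo hi : ℤ}
    (hf : ∀ u v, G.Adj u v → c * (((f v : ℕ) - (f u : ℕ) : ℤ) % n) ∈ Icc lo hi) {u v : V}
    (W : G.Walk u v) : c * W.winding f ∈ Icc (W.length * lo) (W.length * hi) := by
  induction W with
  | nil => simp
  | cons h W ih =>
    obtain ⟨h₁, h₂⟩ := hf _ _ h
    rw [winding_cons, length_cons, mul_add]
    push_cast
    constructor <;> linarith [ih.1, ih.2]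

end Winding
end SimpleGraph.Walk

lemma mul_sub_emod_mem_Icc {k N x y : ℕ} (hk : 1 ≤ k) (hx : x < N) (hy : y < N)
    (h : ((k : ℚ) - 1) / (2 * k - 1) <
        min (((x : ℤ) - y).natAbs : ℚ) (N - ((x : ℤ) - y).natAbs) / N ∧
      min (((x : ℤ) - y).natAbs : ℚ) (N - ((x : ℤ) - y).natAbs) / N < k / (2 * k - 1)) :
    (2 * k - 1 : ℤ) * (((y : ℤ) - x) % N) ∈ Icc ((k - 1 : ℤ) * N + 1) (k * N - 1) := by
  have hk' : (0 : ℚ) < 2 * k - 1 := by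
    have : (1 : ℚ) ≤ k := by exact_mod_cast hk
    linarith
  have hN : (0 : ℚ) < N := by exact_mod_cast hx.trans_le' (Nat.zero_le _)
  set d := ((x : ℤ) - y).natAbs
  rw [div_lt_div_iff₀ hk' hN, div_lt_div_iff₀ hN hk'] at h
  have hmin : min (d : ℚ) (N - d) = ((min (d : ℤ) (N - d) : ℤ) : ℚ) := by push_cast; rfl
  rw [hmin] at h
  have hband : (k - 1) * (N : ℤ) < min (d : ℤ) (N - d) * (2 * k - 1) ∧
      min (d : ℤ) (N - d) * (2 * k - 1) < k * N := by exact_mod_cast h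
  have hmod : ((y : ℤ) - x) % N = d ∨ ((y : ℤ) - x) % N = N - d := by
    rcases le_or_gt (x : ℤ) y with hxy | hxy
    · left
      rw [Int.emod_eq_of_lt (by omega) (by omega)]
      omega
    · right
      rw [← Int.add_emod_right, Int.emod_eq_of_lt (by omega) (by omega)]
      omega
  rw [mem_Icc]
  rcases min_choice (d : ℤ) (N - d) with hm | hm <;> rw [hm] at hband <;>
    rcases hmod with hmod | hmod <;> rw [hmod] <;> constructor <;> linarith [hband.1, hband.2]

lemma andrasfai_step_mem_Icc {k r : ℕ} (hk : 1 ≤ k) (hr : 1 ≤ r)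
    {x y : Fin ((2 * k - 1) * (r - 1) + 2)} (h : (andrasfai k r).Adj x y) :
    (2 * k - 1 : ℤ) * (((y : ℕ) - (x : ℕ) : ℤ) % ((2 * k - 1) * (r - 1) + 2 : ℕ)) ∈
      Icc ((k - 1 : ℤ) * ((2 * k - 1) * (r - 1) + 2 : ℕ) + 1)
        (k * ((2 * k - 1) * (r - 1) + 2 : ℕ) - 1) := by
  have hN : (2 * k - 1) * (r - 1) + 2 = (((2 * k - 1) * (r - 1) + 2 : ℕ) : ℚ) := by
    push_cast [Nat.cast_sub hk, Nat.cast_sub hr, Nat.cast_sub (by omega : 1 ≤ 2 * k)]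
    ring
  have hsymm : ((y : ℤ) - x).natAbs = ((x : ℤ) - y).natAbs := by omega
  rw [andrasfai, fromRel_adj, hsymm, or_self, hN] at h
  exact mul_sub_emod_mem_Icc hk x.isLt y.isLt h.2

lemma eq_or_eq_add_one_of_mul_mem_Icc {k n m : ℤ} (hk : 1 ≤ k) (hn : 0 < n)
    (h : (2 * k - 1) * (n * m) ∈
      Icc ((2 * k + 1) * ((k - 1) * n + 1)) ((2 * k + 1) * (k * n - 1))) :
    m = k ∨ m = k + 1 := by
  obtain ⟨h₁, h₂⟩ := h
  have hlo : (2 * k + 1) * (k - 1) < (2 * k - 1) * m := by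
    by_contra! hc
    nlinarith [mul_le_mul_of_nonneg_left hc hn.le]
  have hhi : (2 * k - 1) * m < (2 * k + 1) * k := by
    by_contra! hc
    nlinarith [mul_le_mul_of_nonneg_left hc hn.le]
  have : k ≤ m := by nlinarith
  have : m ≤ k + 1 := by nlinarith
  omega

lemma false_of_mul_mem_Icc {k n m q L : ℤ} (hk : 1 ≤ k) (hn : 0 < n) (hq : 2 ≤ q) (hL : 0 ≤ L)
    (hm : m = k ∨ m = k + 1) (hLq : L + 2 * q = 2 * (2 * k + 1))
    (h : (2 * k - 1) * (2 * (m * n) - q * n) ∈ Icc (L * ((k - 1) * n + 1)) (L * (k * n - 1))) :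
    False := by
  obtain ⟨h₁, h₂⟩ := h
  have hL' : L = 2 * (2 * k + 1) - 2 * q := by linarith
  subst hL'
  rcases hm with rfl | rfl
  · nlinarith
  · nlinarith

namespace TetraStructure

open Walk

variable {k : ℕ} {V : Type} {T : SimpleGraph V}

/-- The three arcs need not come from one decomposition of `C`: only the lengths of the three
cycles through the centre matter. -/
lemma exists_arcs (S : TetraStructure k T) :
    ∃ (Aab : T.Walk S.a S.b) (Abc : T.Walk S.b S.c) (Aca : T.Walk S.c S.a),
      ((S.Pa.reverse.append Aab).append S.Pb).length = 2 * k + 1 ∧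
      ((S.Pb.reverse.append Abc).append S.Pc).length = 2 * k + 1 ∧
      ((S.Pc.reverse.append Aca).append S.Pa).length = 2 * k + 1 := by
  have ha := S.C.start_mem_support
  have haz : S.a ≠ S.z := fun h ↦ S.hz (h ▸ ha)
  have hbz : S.b ≠ S.z := fun h ↦ S.hz (h ▸ S.hb)
  have hcz : S.c ≠ S.z := fun h ↦ S.hz (h ▸ S.hc)
  have hbPa : S.b ∉ S.Pa.support := fun h ↦ hbz (S.hPaPb _ h S.Pb.start_mem_support)
  have hcPa : S.c ∉ S.Pa.support := fun h ↦ hcz (S.hPaPc _ h S.Pc.start_mem_support)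
  have haPb : S.a ∉ S.Pb.support := fun h ↦ haz (S.hPaPb _ S.Pa.start_mem_support h)
  have hcPb : S.c ∉ S.Pb.support := fun h ↦ hcz (S.hPbPc _ h S.Pc.start_mem_support)
  have haPc : S.a ∉ S.Pc.support := fun h ↦ haz (S.hPaPc _ S.Pa.start_mem_support h)
  have hbPc : S.b ∉ S.Pc.support := fun h ↦ hbz (S.hPbPc _ S.Pb.start_mem_support h)
  obtain ⟨Aab, hab, hcab⟩ := S.hC.exists_isCycle_append_spokes ha S.hb S.hab S.hac S.hbc
    S.hPa S.hPb S.hPb2 S.hPaPb S.hPaC S.hPbC hcPa hcPb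
  obtain ⟨Abc, hbc, habc⟩ := S.hC.exists_isCycle_append_spokes S.hb S.hc S.hbc S.hab.symm
    S.hac.symm S.hPb S.hPc S.hPc2 S.hPbPc S.hPbC S.hPcC haPb haPc
  obtain ⟨Aca, hca, hbca⟩ := S.hC.exists_isCycle_append_spokes S.hc ha S.hac.symm S.hbc.symm
    S.hab S.hPc S.hPa S.hPa2 (fun v hvc hva ↦ S.hPaPc v hva hvc) S.hPcC S.hPaC hbPc hbPa
  exact ⟨Aab, Abc, Aca, S.hlen _ _ hab (by simp) (Or.inl ⟨by simp, by simp, hcab⟩),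
    S.hlen _ _ hbc (by simp) (Or.inr <| Or.inr ⟨by simp, by simp, habc⟩),
    S.hlen _ _ hca (by simp) (Or.inr <| Or.inl ⟨by simp, by simp, hbca⟩)⟩

end TetraStructure

namespace SimpleGraph.Walk

variable {k r : ℕ} {V : Type*} {T : SimpleGraph V}

lemma mul_winding_mem_Icc_of_andrasfai (hk : 1 ≤ k) (hr : 1 ≤ r) (g : T →g andrasfai k r)
    {u v : V} (W : T.Walk u v) :
    (2 * k - 1 : ℤ) * W.winding g ∈
      Icc (W.length * ((k - 1 : ℤ) * ((2 * k - 1) * (r - 1) + 2 : ℕ) + 1))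
        (W.length * (k * ((2 * k - 1) * (r - 1) + 2 : ℕ) - 1)) :=
  W.mul_winding_mem_Icc g fun _ _ h ↦ andrasfai_step_mem_Icc hk hr (g.map_adj h)

lemma winding_eq_of_length_eq (hk : 1 ≤ k) (hr : 1 ≤ r) (g : T →g andrasfai k r) {u : V}
    (W : T.Walk u u) (hW : W.length = 2 * k + 1) :
    W.winding g = k * ((2 * k - 1) * (r - 1) + 2 : ℕ) ∨
      W.winding g = (k + 1) * ((2 * k - 1) * (r - 1) + 2 : ℕ) := by
  obtain ⟨m, hm⟩ := Int.modEq_zero_iff_dvd.mp <| (W.winding_modEq g).trans (by rw [sub_self])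
  have h := W.mul_winding_mem_Icc_of_andrasfai hk hr g
  rw [hm, hW] at h
  push_cast at h
  rcases eq_or_eq_add_one_of_mul_mem_Icc (by exact_mod_cast hk) (by positivity) h with rfl | rfl
  · left; rw [hm]; ring
  · right; rw [hm]; ring

lemma winding_ne_of_shared_spoke (hk : 1 ≤ k) (hr : 1 ≤ r) (g : T →g andrasfai k r)
    {x y w z : V} (P : T.Walk x z) (A : T.Walk x y) (Q : T.Walk y z) (B : T.Walk y w)
    (R : T.Walk w z) (h₁ : ((P.reverse.append A).append Q).length = 2 * k + 1)
    (h₂ : ((Q.reverse.append B).append R).length = 2 * k + 1) (hQ : 2 ≤ Q.length) :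
    ((P.reverse.append A).append Q).winding g ≠ ((Q.reverse.append B).append R).winding g := by
  intro heq
  -- the closed walk `P⁻¹ A B R` is the two cycles glued along `Q`, with `Q` deleted
  have hrev := Q.winding_add_winding_reverse g fun _ _ h ↦ (g.map_adj h).ne
  have hwind : ((P.reverse.append A).append (B.append R)).winding g =
      2 * ((P.reverse.append A).append Q).winding g -
        Q.length * ((2 * k - 1) * (r - 1) + 2 : ℕ) := by
    simp only [winding_append] at heq hrev ⊢
    linarith
  have hlen : ((P.reverse.append A).append (B.append R)).length + 2 * Q.length =
      2 * (2 * k + 1) := by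
    simp only [length_append, length_reverse] at h₁ h₂ ⊢
    omega
  have hW := ((P.reverse.append A).append (B.append R)).mul_winding_mem_Icc_of_andrasfai hk hr g
  rw [hwind] at hW
  rcases winding_eq_of_length_eq hk hr g _ h₁ with hm | hm <;> rw [hm] at hW
  · exact false_of_mul_mem_Icc (by exact_mod_cast hk) (by positivity) (by exact_mod_cast hQ)
      (by positivity) (Or.inl rfl) (by exact_mod_cast hlen) hW
  · exact false_of_mul_mem_Icc (by exact_mod_cast hk) (by positivity) (by exact_mod_cast hQ)
      (by positivity) (Or.inr rfl) (by exact_mod_cast hlen) hW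

end SimpleGraph.Walk

/-- For all integers `k ≥ 2` and `r ≥ 1`, no `(2k+1)`-tetrahedron `T ∈ 𝒯_k` admits a graph
homomorphism into the Andrásfai graph `A_{k,r}`. -/
theorem tetra_not_hom_andrasfai (k r : ℕ) (hk : 2 ≤ k) (hr : 1 ≤ r)
    {V : Type} (T : SimpleGraph V) (hT : Nonempty (TetraStructure k T)) :
    IsEmpty (T →g andrasfai k r) := by
  obtain ⟨S⟩ := hT
  obtain ⟨Aab, Abc, Aca, hab, hbc, hca⟩ := S.exists_arcs
  refine ⟨fun g ↦ ?_⟩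
  have hk' : 1 ≤ k := by omega
  have hwab := Walk.winding_eq_of_length_eq hk' hr g _ hab
  have hwbc := Walk.winding_eq_of_length_eq hk' hr g _ hbc
  have hwca := Walk.winding_eq_of_length_eq hk' hr g _ hca
  -- two of the three windings coincide
  rcases hwab with h₁ | h₁ <;> rcases hwbc with h₂ | h₂ <;> rcases hwca with h₃ | h₃
  all_goals first
    | exact Walk.winding_ne_of_shared_spoke hk' hr g _ _ _ _ _ hab hbc S.hPb2 (h₁.trans h₂.symm)
    | exact Walk.winding_ne_of_shared_spoke hk' hr g _ _ _ _ _ hbc hca S.hPc2 (h₂.trans h₃.symm)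
    | exact Walk.winding_ne_of_shared_spoke hk' hr g _ _ _ _ _ hca hab S.hPa2 (h₃.trans h₁.symm)
end
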